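/- arXiv:1011.1790 — 9 statements merged into one kernel-verified Lean document; each statement's English description precedes it below -/
import Mathlib

section
/- For every real z, the integral over ℝ of (e^{i x z} − 1)·e^{α x}/cosh(x) dx equals π/cosh(π(z − iα)/2) − π/cos(πα/2), where |α| < 1. -/
/-!
The substitution `t = sigmoid (2x)` turns `∫ e^{βx} / cosh x dx` into the Beta integral
`B(u, 1 - u)` with `u = (1 + β) / 2`, and `B(u, 1 - u) = Γ(u) Γ(1 - u) = π / sin (π u)`
by Euler's reflection formula, i.e. `π / cos (π β / 2)`. The claimed identity is the
difference of this evaluation at `β = α + iz` and at `β = α`.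
-/

open Real Complex MeasureTheory Set

namespace Real

lemma log_sigmoid_sub_log_one_sub_sigmoid (y : ℝ) :
    Real.log (sigmoid y) - Real.log (1 - sigmoid y) = y := by
  rw [← sigmoid_neg, ← sigmoid_mul_rexp_neg,
    Real.log_mul (sigmoid_pos y).ne' (Real.exp_pos _).ne', Real.log_exp]
  ring

lemma one_sub_sigmoid (y : ℝ) : 1 - sigmoid y = (1 + Real.exp y)⁻¹ := by
  rw [← sigmoid_neg, sigmoid_def, neg_neg]

lemma image_univ_sigmoid : sigmoid '' univ = Ioo 0 1 := by
  rw [image_univ, range_sigmoid]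

end Real

lemma Complex.ofReal_cpow_eq_exp {s : ℝ} (hs : 0 < s) (w : ℂ) :
    (s : ℂ) ^ w = Complex.exp (Real.log s * w) := by
  rw [cpow_def_of_ne_zero (by exact_mod_cast hs.ne'), ofReal_log hs.le]

lemma abs_deriv_sigmoid_smul_betaIntegrand (u : ℂ) (y : ℝ) :
    |sigmoid y * (1 - sigmoid y)| •
        ((sigmoid y : ℂ) ^ (u - 1) * (1 - (sigmoid y : ℂ)) ^ (1 - u - 1))
      = Complex.exp (u * y) / (1 + Real.exp y) := by
  set s := sigmoid y with hs_def
  have hs : 0 < s := sigmoid_pos y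
  have hs' : 0 < 1 - s := sub_pos.2 (sigmoid_lt_one y)
  rw [abs_of_pos (mul_pos hs hs')]
  have hexp : ∀ {t : ℝ}, 0 < t → (t : ℂ) = Complex.exp (Real.log t) := fun ht => by
    rw [← Complex.ofReal_exp, Real.exp_log ht]
  have hy : (y : ℂ) = Real.log s - Real.log (1 - s) := by
    exact_mod_cast (log_sigmoid_sub_log_one_sub_sigmoid y).symm
  have hrhs : Complex.exp (u * y) / (1 + Real.exp y)
      = Complex.exp (u * y) * ((1 - s : ℝ) : ℂ) := by
    rw [hs_def, one_sub_sigmoid]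
    push_cast
    ring
  rw [hrhs, show (1 : ℂ) - s = ((1 - s : ℝ) : ℂ) by push_cast; ring,
    Complex.ofReal_cpow_eq_exp hs, Complex.ofReal_cpow_eq_exp hs', Complex.real_smul,
    Complex.ofReal_mul, hexp hs, hexp hs', hy,
    ← Complex.exp_add, ← Complex.exp_add, ← Complex.exp_add, ← Complex.exp_add]
  ring_nf

lemma Complex.betaIntegral_one_sub_eq_integral (u : ℂ) :
    betaIntegral u (1 - u) = ∫ y : ℝ, Complex.exp (u * y) / (1 + Real.exp y) := by
  have hsub := integral_image_eq_integral_abs_deriv_smul MeasurableSet.univ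
    (fun y _ => (hasDerivAt_sigmoid y).hasDerivWithinAt) sigmoid_injective.injOn
    (fun t : ℝ => (t : ℂ) ^ (u - 1) * (1 - (t : ℂ)) ^ (1 - u - 1))
  simp only [image_univ_sigmoid, abs_deriv_sigmoid_smul_betaIntegrand, setIntegral_univ] at hsub
  rw [betaIntegral, intervalIntegral.integral_of_le zero_le_one, integral_Ioc_eq_integral_Ioo,
    hsub]

lemma integrable_exp_mul_div_one_add_exp {u : ℂ} (hu0 : 0 < u.re) (hu1 : u.re < 1) :
    Integrable (fun y : ℝ => Complex.exp (u * y) / (1 + Real.exp y)) := by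
  have hbeta := (Complex.betaIntegral_convergent (v := 1 - u) hu0
    (by simpa only [Complex.sub_re, Complex.one_re, sub_pos] using hu1)).1
  have hsub := integrableOn_image_iff_integrableOn_abs_deriv_smul MeasurableSet.univ
    (fun y _ => (hasDerivAt_sigmoid y).hasDerivWithinAt) sigmoid_injective.injOn
    (fun t : ℝ => (t : ℂ) ^ (u - 1) * (1 - (t : ℂ)) ^ (1 - u - 1))
  simp only [image_univ_sigmoid, abs_deriv_sigmoid_smul_betaIntegrand, integrableOn_univ] at hsub
  exact hsub.1 (hbeta.mono_set Ioo_subset_Ioc_self)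

lemma Complex.betaIntegral_one_sub {u : ℂ} (hu0 : 0 < u.re) (hu1 : u.re < 1) :
    betaIntegral u (1 - u) = π / Complex.sin (π * u) := by
  rw [← Gamma_mul_Gamma_one_sub, Gamma_mul_Gamma_eq_betaIntegral hu0 (by simpa using hu1),
    add_sub_cancel, Gamma_one, one_mul]

lemma exp_mul_div_cosh_eq (β : ℂ) (x : ℝ) :
    Complex.exp (β * x) / (Real.cosh x : ℂ)
      = 2 * (Complex.exp ((β + 1) / 2 * ↑(2 * x)) / (1 + Real.exp (2 * x))) := by
  have hcosh : (Real.cosh x : ℂ) ≠ 0 := by exact_mod_cast (Real.cosh_pos x).ne'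
  have hden : (1 + Real.exp (2 * x) : ℂ) ≠ 0 := by
    exact_mod_cast (by positivity : 0 < 1 + Real.exp (2 * x)).ne'
  rw [div_eq_iff hcosh, mul_comm 2, div_mul_eq_mul_div, div_mul_eq_mul_div, eq_div_iff hden,
    Complex.ofReal_cosh, Complex.cosh, Complex.exp_neg]
  push_cast
  rw [show (β + 1) / 2 * (2 * (x : ℂ)) = β * x + x by ring, Complex.exp_add,
    show 2 * (x : ℂ) = x + x by ring, Complex.exp_add]
  field_simp
  ring

lemma re_add_one_div_two_mem_Ioo {β : ℂ} (hβ : |β.re| < 1) :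
    ((β + 1) / 2).re ∈ Ioo 0 1 := by
  obtain ⟨hβ0, hβ1⟩ := abs_lt.mp hβ
  simp only [Complex.div_ofNat_re, Complex.add_re, Complex.one_re, mem_Ioo]
  constructor <;> linarith

lemma integrable_exp_mul_div_cosh {β : ℂ} (hβ : |β.re| < 1) :
    Integrable (fun x : ℝ => Complex.exp (β * x) / (Real.cosh x : ℂ)) := by
  obtain ⟨hu0, hu1⟩ := re_add_one_div_two_mem_Ioo hβ
  simp_rw [exp_mul_div_cosh_eq]
  exact ((integrable_exp_mul_div_one_add_exp hu0 hu1).comp_mul_left' two_ne_zero).const_mul 2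

lemma integral_exp_mul_div_cosh {β : ℂ} (hβ : |β.re| < 1) :
    ∫ x : ℝ, Complex.exp (β * x) / (Real.cosh x : ℂ) = π / Complex.cos (π * β / 2) := by
  obtain ⟨hu0, hu1⟩ := re_add_one_div_two_mem_Ioo hβ
  have hsubst : ∫ x : ℝ, Complex.exp (β * x) / (Real.cosh x : ℂ)
      = Complex.betaIntegral ((β + 1) / 2) (1 - (β + 1) / 2) := by
    simp_rw [exp_mul_div_cosh_eq, integral_const_mul,
      Measure.integral_comp_mul_left
        (fun y : ℝ => Complex.exp ((β + 1) / 2 * y) / (1 + Real.exp y)),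
      Complex.betaIntegral_one_sub_eq_integral]
    norm_num [← mul_assoc]
  rw [hsubst, Complex.betaIntegral_one_sub hu0 hu1,
    show (π : ℂ) * ((β + 1) / 2) = π * β / 2 + π / 2 by ring, Complex.sin_add_pi_div_two]

/-- For every real `z`, the integral over ℝ of `(e^{ixz} - 1) e^{αx}/cosh x`
equals `π/cosh(π(z-iα)/2) - π/cos(πα/2)`, for `|α| < 1`. -/
theorem stmt0 (α : ℝ) (hα : |α| < 1) (z : ℝ) :
    ∫ x : ℝ, (Complex.exp (Complex.I * x * z) - 1) * Complex.exp ((α : ℂ) * x)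
        / (Real.cosh x : ℂ)
      = (π : ℂ) / Complex.cosh ((π : ℂ) * ((z : ℂ) - Complex.I * α) / 2)
        - (π : ℂ) / (Real.cos (π * α / 2) : ℂ) := by
  have hshift : |((α : ℂ) + Complex.I * z).re| < 1 := by simpa using hα
  have hreal : |(α : ℂ).re| < 1 := by simpa using hα
  have hsplit : ∀ x : ℝ, (Complex.exp (Complex.I * x * z) - 1) * Complex.exp ((α : ℂ) * x)
        / (Real.cosh x : ℂ)
      = Complex.exp (((α : ℂ) + Complex.I * z) * x) / (Real.cosh x : ℂ)
        - Complex.exp ((α : ℂ) * x) / (Real.cosh x : ℂ) := fun x => by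
    rw [sub_mul, one_mul, sub_div, ← Complex.exp_add]
    ring_nf
  rw [integral_congr_ae (Filter.Eventually.of_forall hsplit),
    integral_sub (integrable_exp_mul_div_cosh hshift) (integrable_exp_mul_div_cosh hreal),
    integral_exp_mul_div_cosh hshift, integral_exp_mul_div_cosh hreal, Complex.ofReal_cos,
    ← Complex.cos_mul_I]
  push_cast
  congr 3
  linear_combination (π * α / 2 : ℂ) * Complex.I_sq
end

section
/- For complex parameters a, b (not nonpositive integers) and complex x with a+x, b+x not nonpositive integers, the infinite product ∏_{n≥0} (1 + x/(n+a))/(1 + x/(n+b)) converges and equals Γ(a)Γ(b+x)/(Γ(b)Γ(a+x)). -/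
/-!
Since `1 + x / (j + s) = (s + x + j) / (s + j)`, the `n`-th partial product of
`∏ (1 + x / (j + s))` is `n ^ x * GammaSeq s n / GammaSeq (s + x) n`, so by Euler's limit formula
it behaves like `n ^ x * Γ(s) / Γ(s + x)`. In the quotient of the products for `s = a` and `s = b`
the factor `n ^ x` cancels. The factors are `1 + x (b - a) / ((n + a) (n + b + x)) = 1 + O(n⁻²)`,
which gives unconditional convergence.
-/

open Complex Filter Finset Topology Asymptotics

lemma isEquivalent_natCast_add (a : ℂ) :
    (fun n : ℕ => (n : ℂ) + a) ~[atTop] (fun n : ℕ => (n : ℂ)) := by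
  refine IsEquivalent.refl.add_isLittleO (isLittleO_const_left.mpr (Or.inr ?_))
  simpa only [Function.comp_def, norm_natCast] using tendsto_natCast_atTop_atTop

lemma summable_inv_natCast_add_mul_natCast_add (a d : ℂ) :
    Summable fun n : ℕ => (((n : ℂ) + a) * ((n : ℂ) + d))⁻¹ := by
  have hequiv := ((isEquivalent_natCast_add a).mul (isEquivalent_natCast_add d)).inv
  refine summable_of_isBigO_nat (g := fun n : ℕ => ((n : ℝ) ^ 2)⁻¹)
    (Real.summable_nat_pow_inv.mpr one_lt_two) (hequiv.isBigO.trans (isBigO_of_le _ fun n => ?_))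
  simp [sq]

lemma one_add_div_div_one_add_div {K : Type*} [Field K] {p q : K} (x : K)
    (hp : p ≠ 0) (hq : q ≠ 0) (hqx : q + x ≠ 0) :
    (1 + x / p) / (1 + x / q) = 1 + x * (q - p) / (p * (q + x)) := by
  field_simp
  ring

lemma natCast_add_ne_zero {s : ℂ} (hs : ∀ n : ℕ, s ≠ -(n : ℂ)) (n : ℕ) : (n : ℂ) + s ≠ 0 :=
  fun h => hs n (eq_neg_of_add_eq_zero_right h)

lemma prod_add_natCast_ne_zero {s : ℂ} (hs : ∀ n : ℕ, s ≠ -(n : ℂ)) (n : ℕ) :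
    ∏ j ∈ range n, (s + j) ≠ 0 :=
  prod_ne_zero_iff.mpr fun j _ => add_comm (j : ℂ) s ▸ natCast_add_ne_zero hs j

lemma natCast_cpow_ne_zero {n : ℕ} (hn : n ≠ 0) (x : ℂ) : (n : ℂ) ^ x ≠ 0 :=
  cpow_ne_zero_iff.mpr (Or.inl (Nat.cast_ne_zero.mpr hn))

lemma prod_one_add_div_eq_cpow_mul_GammaSeq_div (s x : ℂ) (hs : ∀ n : ℕ, s ≠ -(n : ℂ))
    (hsx : ∀ n : ℕ, s + x ≠ -(n : ℂ)) {n : ℕ} (hn : n ≠ 0) :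
    ∏ j ∈ range (n + 1), (1 + x / ((j : ℂ) + s))
      = (n : ℂ) ^ x * (GammaSeq s n / GammaSeq (s + x) n) := by
  have hterm (j : ℕ) : 1 + x / ((j : ℂ) + s) = (s + x + j) / (s + j) := by
    rw [one_add_div (natCast_add_ne_zero hs j)]; ring
  rw [prod_congr rfl fun j _ => hterm j, prod_div_distrib, GammaSeq, GammaSeq,
    cpow_add _ _ (Nat.cast_ne_zero.mpr hn)]
  field_simp [prod_add_natCast_ne_zero hs, prod_add_natCast_ne_zero hsx,
    natCast_cpow_ne_zero hn, n.factorial_ne_zero]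

lemma tendsto_prod_one_add_div_div_cpow (s x : ℂ) (hs : ∀ n : ℕ, s ≠ -(n : ℂ))
    (hsx : ∀ n : ℕ, s + x ≠ -(n : ℂ)) :
    Tendsto (fun n : ℕ => (∏ j ∈ range (n + 1), (1 + x / ((j : ℂ) + s))) / (n : ℂ) ^ x)
      atTop (𝓝 (Gamma s / Gamma (s + x))) := by
  refine ((GammaSeq_tendsto_Gamma s).div (GammaSeq_tendsto_Gamma (s + x))
    (Gamma_ne_zero hsx)).congr' ?_
  filter_upwards [eventually_ne_atTop 0] with n hn
  rw [prod_one_add_div_eq_cpow_mul_GammaSeq_div s x hs hsx hn,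
    mul_div_cancel_left₀ _ (natCast_cpow_ne_zero hn x), Pi.div_apply]

/-- For complex `a`, `b` (not nonpositive integers) and complex `x` with `a+x`, `b+x`
not nonpositive integers, the infinite product `∏_{n≥0} (1+x/(n+a))/(1+x/(n+b))`
converges and equals `Γ(a)Γ(b+x)/(Γ(b)Γ(a+x))`. -/
theorem stmt1 (a b x : ℂ)
    (ha : ∀ n : ℕ, a ≠ -(n : ℂ)) (hb : ∀ n : ℕ, b ≠ -(n : ℂ))
    (hax : ∀ n : ℕ, a + x ≠ -(n : ℂ)) (hbx : ∀ n : ℕ, b + x ≠ -(n : ℂ)) :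
    Multipliable (fun n : ℕ => (1 + x / ((n : ℂ) + a)) / (1 + x / ((n : ℂ) + b))) ∧
    ∏' n : ℕ, (1 + x / ((n : ℂ) + a)) / (1 + x / ((n : ℂ) + b))
      = Complex.Gamma a * Complex.Gamma (b + x)
        / (Complex.Gamma b * Complex.Gamma (a + x)) := by
  have hmul : Multipliable fun n : ℕ => (1 + x / ((n : ℂ) + a)) / (1 + x / ((n : ℂ) + b)) := by
    convert Complex.multipliable_one_add_of_summable
      ((summable_inv_natCast_add_mul_natCast_add a (b + x)).mul_left (x * (b - a))) using 2 with n
    rw [one_add_div_div_one_add_div x (natCast_add_ne_zero ha n) (natCast_add_ne_zero hb n)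
      (add_assoc (n : ℂ) b x ▸ natCast_add_ne_zero hbx n)]
    ring
  have hpartial := (tendsto_prod_one_add_div_div_cpow a x ha hax).div
    (tendsto_prod_one_add_div_div_cpow b x hb hbx)
    (div_ne_zero (Gamma_ne_zero hb) (Gamma_ne_zero hbx))
  rw [show Gamma a * Gamma (b + x) / (Gamma b * Gamma (a + x))
      = Gamma a / Gamma (a + x) / (Gamma b / Gamma (b + x)) by
    rw [div_div_div_eq, mul_comm (Gamma (a + x))]]
  refine ⟨hmul, tendsto_nhds_unique
    (hmul.hasProd.tendsto_prod_nat.comp (tendsto_add_atTop_nat 1)) (hpartial.congr' ?_)⟩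
  filter_upwards [eventually_ne_atTop 0] with n hn
  rw [Pi.div_apply, div_div_div_cancel_right₀ (natCast_cpow_ne_zero hn x), Function.comp_apply,
    prod_div_distrib]
end

section
/- Suppose f⁺ and f⁻ satisfy f^{±}(0)=1, f^{±} is analytic in the open upper (respectively lower) half-plane, continuous and nonvanishing on the closed half-plane, with z^{−1}·log f^{±}(z) → 0 as z → ∞ within the closed half-plane, and q/(q+Ψ(z)) = f⁺(z)·f⁻(z) for all real z. Then f⁺ ≡ φ_q⁺ and f⁻ ≡ φ_q⁻, the Wiener–Hopf factors of the Lévy process. -/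
open Filter Complex

/-- `WHCandidate q Ψ s f` expresses the conditions on a Wiener--Hopf factor on the
half-plane `{z | 0 ≤ s * Im z}` (upper half-plane for `s = 1`, lower for `s = -1`):
`f 0 = 1`, `f` is analytic in the open half-plane, continuous and nonvanishing on the
closed half-plane, and there is a continuous logarithm `g` of `f` on the closed
half-plane with `g z / z → 0` as `z → ∞` within the closed half-plane. -/
def WHCandidate (s : ℝ) (f : ℂ → ℂ) : Prop :=
  f 0 = 1 ∧
  (∀ z : ℂ, 0 < s * z.im → DifferentiableAt ℂ f z) ∧
  ContinuousOn f {z : ℂ | 0 ≤ s * z.im} ∧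
  (∀ z : ℂ, 0 ≤ s * z.im → f z ≠ 0) ∧
  (∃ g : ℂ → ℂ, ContinuousOn g {z : ℂ | 0 ≤ s * z.im} ∧
    (∀ z : ℂ, 0 ≤ s * z.im → Complex.exp (g z) = f z) ∧
    Tendsto (fun z => g z / z)
      (comap (fun z : ℂ => ‖z‖) atTop ⊓ 𝓟 {z : ℂ | 0 ≤ s * z.im}) (nhds 0))

/-!
Take continuous logarithms `A = log (f⁺ / φ⁺)` on the closed upper half-plane and
`B = log (φ⁻ / f⁻)` on the closed lower one, normalised by `A 0 = B 0 = 0`. Both are holomorphic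
inside, `o(|z|)` at infinity, and the factorization identity gives `exp A = exp B` on `ℝ`, hence
`A = B` on `ℝ` by connectedness. So `A` and `B` glue to an entire function of sublinear growth,
which must be constant. Instead of gluing we reflect: with `R z = conj (B (conj z))`, both `A - R`
and `I * (A + R)` are sublinear in the upper half-plane and purely imaginary on `ℝ`.
Phragmén–Lindelöf, applied to `exp (± D)`, forces such a `D` to have vanishing real part, so it is
constant by the open mapping theorem. Hence `A = R = 0`.
-/

open Set Topology Bornology Asymptotics ComplexConjugate

theorem Complex.log_exp_of_norm_lt_pi {w : ℂ} (hw : ‖w‖ < Real.pi) : log (exp w) = w := by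
  have him := abs_le.mp (abs_im_le_norm w)
  exact log_exp (by linarith) (by linarith)

theorem ContinuousAt.eventually_log_exp_sub {X : Type*} [TopologicalSpace X] {g : X → ℂ}
    {x : X} (hg : ContinuousAt g x) :
    ∀ᶠ y in 𝓝 x, Complex.log (Complex.exp (g y - g x)) = g y - g x := by
  have hlim : Tendsto (fun y => g y - g x) (𝓝 x) (𝓝 0) := by
    simpa using hg.sub_const (g x)
  filter_upwards [hlim (Metric.ball_mem_nhds 0 Real.pi_pos)] with y hy
  exact log_exp_of_norm_lt_pi (mem_ball_zero_iff.mp hy)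

theorem Continuous.eq_of_exp_eq {X : Type*} [TopologicalSpace X] [PreconnectedSpace X]
    {F G : X → ℂ} (hF : Continuous F) (hG : Continuous G)
    (hexp : ∀ x, Complex.exp (F x) = Complex.exp (G x))
    {x₀ : X} (h₀ : F x₀ = G x₀) (x : X) : F x = G x := by
  have hloc : IsLocallyConstant (F - G) := by
    refine (IsLocallyConstant.iff_eventually_eq _).mpr fun y => ?_
    filter_upwards [(hF.sub hG).continuousAt.eventually_log_exp_sub] with z hz
    rw [← sub_eq_zero, ← hz]
    simp [exp_sub, hexp]
  simpa [sub_eq_zero, h₀] using hloc.apply_eq_of_preconnectedSpace x x₀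

theorem DifferentiableAt.of_exp_eq {f g : ℂ → ℂ} {z : ℂ} (hf : DifferentiableAt ℂ f z)
    (hg : ContinuousAt g z) (hexp : ∀ᶠ w in 𝓝 z, Complex.exp (g w) = f w) :
    DifferentiableAt ℂ g z := by
  have hzf := hexp.self_of_nhds
  have hfz : f z ≠ 0 := hzf ▸ exp_ne_zero _
  have hlog : DifferentiableAt ℂ (fun w => g z + Complex.log (f w / f z)) z :=
    ((hf.div_const _).clog (by simp [hfz])).const_add _
  refine hlog.congr_of_eventuallyEq ?_
  filter_upwards [hg.eventually_log_exp_sub, hexp] with w hw hwf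
  rw [← hwf, ← hzf, ← exp_sub, hw]
  ring

structure HalfPlaneSublinear (s : ℝ) (g : ℂ → ℂ) : Prop where
  continuousOn : ContinuousOn g {z : ℂ | 0 ≤ s * z.im}
  differentiableAt : ∀ z : ℂ, 0 < s * z.im → DifferentiableAt ℂ g z
  isLittleO : g =o[cobounded ℂ ⊓ 𝓟 {z : ℂ | 0 ≤ s * z.im}] id

namespace HalfPlaneSublinear

variable {s : ℝ} {g h : ℂ → ℂ}

theorem add (hg : HalfPlaneSublinear s g) (hh : HalfPlaneSublinear s h) :
    HalfPlaneSublinear s (g + h) :=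
  ⟨hg.continuousOn.add hh.continuousOn, fun z hz => (hg.differentiableAt z hz).add
    (hh.differentiableAt z hz), hg.isLittleO.add hh.isLittleO⟩

theorem sub (hg : HalfPlaneSublinear s g) (hh : HalfPlaneSublinear s h) :
    HalfPlaneSublinear s (g - h) :=
  ⟨hg.continuousOn.sub hh.continuousOn, fun z hz => (hg.differentiableAt z hz).sub
    (hh.differentiableAt z hz), hg.isLittleO.sub hh.isLittleO⟩

theorem const_mul (hg : HalfPlaneSublinear s g) (c : ℂ) :
    HalfPlaneSublinear s (fun z => c * g z) :=
  ⟨continuousOn_const.mul hg.continuousOn, fun z hz => (hg.differentiableAt z hz).const_mul c,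
    hg.isLittleO.const_mul_left c⟩

theorem sub_const (hg : HalfPlaneSublinear s g) (c : ℂ) :
    HalfPlaneSublinear s (fun z => g z - c) :=
  ⟨hg.continuousOn.sub continuousOn_const, fun z hz => (hg.differentiableAt z hz).sub_const c,
    hg.isLittleO.sub ((isLittleO_const_id_cobounded c).mono inf_le_left)⟩

theorem conj_comp_conj (hg : HalfPlaneSublinear s g) :
    HalfPlaneSublinear (-s) (conj ∘ g ∘ conj) := by
  have hmaps : MapsTo conj {z : ℂ | 0 ≤ -s * z.im} {z : ℂ | 0 ≤ s * z.im} := fun z hz => by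
    simpa using hz
  refine ⟨?_, fun z hz => ?_, ?_⟩
  · exact continuous_conj.comp_continuousOn
      (hg.continuousOn.comp continuous_conj.continuousOn hmaps)
  · simpa using (hg.differentiableAt (conj z) (by simpa using hz)).conj_conj
  · have hT : Tendsto conj (cobounded ℂ ⊓ 𝓟 {z : ℂ | 0 ≤ -s * z.im})
        (cobounded ℂ ⊓ 𝓟 {z : ℂ | 0 ≤ s * z.im}) :=
      isometry_conj.antilipschitz.tendsto_cobounded.inf (tendsto_principal_principal.mpr hmaps)
    rw [← isLittleO_norm_norm]
    simpa [Function.comp_def] using (hg.isLittleO.comp_tendsto hT).norm_norm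

end HalfPlaneSublinear

theorem WHCandidate.exists_log {s : ℝ} {f : ℂ → ℂ} (hf : WHCandidate s f) :
    ∃ g, HalfPlaneSublinear s g ∧ g 0 = 0 ∧ ∀ z, 0 ≤ s * z.im → exp (g z) = f z := by
  obtain ⟨hf0, hfd, -, -, g, hgc, hgf, hgt⟩ := hf
  have hg : HalfPlaneSublinear s g := by
    refine ⟨hgc, fun z hz => ?_, ?_⟩
    · have hmem : {w : ℂ | 0 ≤ s * w.im} ∈ 𝓝 z :=
        mem_of_superset ((isOpen_lt continuous_const (continuous_const.mul continuous_im)).mem_nhds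
          hz) fun w (hw : 0 < s * w.im) => hw.le
      exact (hfd z hz).of_exp_eq (hgc.continuousAt hmem) (eventually_of_mem hmem hgf)
    · refine (isLittleO_iff_tendsto' ?_).mpr (by rwa [comap_norm_atTop] at hgt)
      exact ((eventually_ne_cobounded 0).filter_mono inf_le_left).mono fun z hz h => absurd h hz
  refine ⟨fun z => g z - g 0, hg.sub_const (g 0), sub_self _, fun z hz => ?_⟩
  rw [exp_sub, hgf z hz, hgf 0 (by simp), hf0, div_one]

namespace HalfPlaneSublinear

variable {s : ℝ} {g : ℂ → ℂ}

theorem exists_norm_le (hg : HalfPlaneSublinear s g) {δ : ℝ} (hδ : 0 < δ) :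
    ∃ R, ∀ z, 0 ≤ s * z.im → R ≤ ‖z‖ → ‖g z‖ ≤ δ * ‖z‖ := by
  have h := hg.isLittleO.bound hδ
  rw [eventually_inf_principal, ← comap_norm_atTop, eventually_comap, eventually_atTop] at h
  obtain ⟨R, hR⟩ := h
  exact ⟨R, fun z hz hzR => hR _ hzR z rfl hz⟩

theorem diffContOnCl_exp_rotate (hg : HalfPlaneSublinear 1 g) (ε : ℝ) :
    DiffContOnCl ℂ (fun w => exp (g (I * w) - ε * w)) {w | 0 < w.re} := by
  refine ⟨fun w hw => ?_, ?_⟩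
  · have hgI : DifferentiableAt ℂ (fun w => g (I * w)) w :=
      (hg.differentiableAt _ (by simpa using hw)).comp w (differentiableAt_id.const_mul I)
    exact (hgI.sub (differentiableAt_id.const_mul _)).cexp.differentiableWithinAt
  · rw [closure_setOfPred_lt_re]
    have hmaps : MapsTo (I * ·) {w : ℂ | 0 ≤ w.re} {z : ℂ | 0 ≤ 1 * z.im} := fun w hw => by
      simpa using hw
    exact ((hg.continuousOn.comp (continuous_const_mul I).continuousOn hmaps).sub
      (by fun_prop)).cexp

theorem isBigO_exp_rotate (hg : HalfPlaneSublinear 1 g) {ε : ℝ} (hε : 0 ≤ ε) :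
    (fun w => exp (g (I * w) - ε * w)) =O[cobounded ℂ ⊓ 𝓟 {w | 0 < w.re}]
      fun w => Real.exp (1 * ‖w‖ ^ (1 : ℝ)) := by
  obtain ⟨R, hR⟩ := hg.exists_norm_le one_pos
  refine IsBigO.of_bound 1 ?_
  rw [eventually_inf_principal]
  filter_upwards [tendsto_norm_cobounded_atTop.eventually_ge_atTop R] with w hwR hw
  have hbound := hR (I * w) (by simpa using le_of_lt hw) (by simpa using hwR)
  rw [norm_mul, norm_I, one_mul, one_mul] at hbound
  rw [norm_exp, Real.rpow_one, one_mul, one_mul, Real.norm_of_nonneg (Real.exp_pos _).le,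
    Real.exp_le_exp, sub_re, re_ofReal_mul]
  nlinarith [re_le_norm (g (I * w))]

theorem re_le_mul_im (hg : HalfPlaneSublinear 1 g) (hre : ∀ x : ℝ, (g x).re ≤ 0) {ε : ℝ}
    (hε : 0 < ε) {z : ℂ} (hz : 0 ≤ z.im) : (g z).re ≤ ε * z.im := by
  -- Rotate the upper half-plane onto the right one; the damping factor `exp (-ε w)` makes
  -- the rotated function bounded on the positive real axis, where `g` grows sublinearly.
  set G : ℂ → ℂ := fun w => exp (g (I * w) - ε * w)
  have hnorm : ∀ w, ‖G w‖ = Real.exp ((g (I * w)).re - ε * w.re) := by simp [G, norm_exp]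
  obtain ⟨R, hR⟩ := hg.exists_norm_le hε
  have hreal : IsBoundedUnder (· ≤ ·) atTop fun x : ℝ => ‖G x‖ := by
    refine isBoundedUnder_of_eventually_le (a := 1) ?_
    filter_upwards [eventually_ge_atTop R, eventually_ge_atTop 0] with x hxR hx
    have hbound := hR (I * x) (by simpa using hx) (by simpa [abs_of_nonneg hx] using hxR)
    rw [norm_mul, norm_I, one_mul, norm_real, Real.norm_of_nonneg hx] at hbound
    rw [hnorm, Real.exp_le_one_iff, ofReal_re]
    linarith [re_le_norm (g (I * x))]
  have himag : ∀ x : ℝ, ‖G (x * I)‖ ≤ 1 := by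
    intro x
    have hrefl : I * (x * I) = ((-x : ℝ) : ℂ) := by
      rw [mul_left_comm, I_mul_I]
      push_cast
      ring
    rw [hnorm, Real.exp_le_one_iff, hrefl]
    simpa using hre (-x)
  have h := PhragmenLindelof.right_half_plane_of_bounded_on_real (hg.diffContOnCl_exp_rotate ε)
    ⟨1, one_lt_two, 1, hg.isBigO_exp_rotate hε.le⟩ hreal himag (z := -I * z)
    (by simpa using hz)
  have hrot_inv : I * (-I * z) = z := by rw [← mul_assoc, mul_neg, I_mul_I, neg_neg, one_mul]
  rw [hnorm, Real.exp_le_one_iff, hrot_inv] at h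
  simpa using h

theorem re_nonpos (hg : HalfPlaneSublinear 1 g) (hre : ∀ x : ℝ, (g x).re ≤ 0) {z : ℂ}
    (hz : 0 ≤ z.im) : (g z).re ≤ 0 := by
  refine le_of_forall_pos_le_add fun δ hδ => ?_
  calc (g z).re ≤ δ / (z.im + 1) * z.im := hg.re_le_mul_im hre (by positivity) hz
    _ ≤ 0 + δ := by
      rw [zero_add, div_mul_eq_mul_div, div_le_iff₀ (by positivity)]
      nlinarith

theorem apply_eq_apply_zero_of_re_ofReal_eq_zero (hg : HalfPlaneSublinear 1 g)
    (hre : ∀ x : ℝ, (g x).re = 0) {z : ℂ} (hz : 0 ≤ z.im) : g z = g 0 := by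
  have hre_half : ∀ w : ℂ, 0 < w.im → (g w).re = 0 := fun w hw =>
    le_antisymm (hg.re_nonpos (fun x => (hre x).le) hw.le)
      (by simpa using (hg.const_mul (-1)).re_nonpos (fun x => by simp [hre x]) hw.le)
  have hU : IsOpen {w : ℂ | 0 < w.im} := isOpen_lt continuous_const continuous_im
  have hanalytic : AnalyticOnNhd ℂ g {w : ℂ | 0 < w.im} :=
    DifferentiableOn.analyticOnNhd (fun w hw =>
      (hg.differentiableAt w (by simpa using hw)).differentiableWithinAt) hU
  obtain ⟨c, hc⟩ := hanalytic.eq_const_of_re_eq_const hre_half hU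
    ((convex_halfSpace_im_gt 0).isConnected ⟨I, by simp⟩)
  have hclosure : EqOn g (fun _ => c) {w : ℂ | 0 ≤ w.im} :=
    EqOn.of_subset_closure hc (by simpa using hg.continuousOn) continuousOn_const
      (fun w (hw : 0 < w.im) => hw.le) (by simp)
  rw [hclosure hz, hclosure (by simp)]

theorem apply_eq_apply_zero_of_eq_ofReal {A B : ℂ → ℂ} (hA : HalfPlaneSublinear 1 A)
    (hB : HalfPlaneSublinear (-1) B) (hAB : ∀ x : ℝ, A x = B x) :
    (∀ z : ℂ, 0 ≤ z.im → A z = A 0) ∧ ∀ z : ℂ, z.im ≤ 0 → B z = B 0 := by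
  set R := conj ∘ B ∘ conj
  have hR : HalfPlaneSublinear 1 R := neg_neg (1 : ℝ) ▸ hB.conj_comp_conj
  have hR_real : ∀ x : ℝ, R x = conj (A x) := fun x => by simp [R, hAB]
  have hsub : ∀ z : ℂ, 0 ≤ z.im → A z - R z = A 0 - R 0 := fun z hz =>
    (hA.sub hR).apply_eq_apply_zero_of_re_ofReal_eq_zero (fun x => by simp [hR_real]) hz
  have hadd : ∀ z : ℂ, 0 ≤ z.im → A z + R z = A 0 + R 0 := fun z hz =>
    mul_left_cancel₀ I_ne_zero (((hA.add hR).const_mul I).apply_eq_apply_zero_of_re_ofReal_eq_zero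
      (fun x => by simp [hR_real]) hz)
  refine ⟨fun z hz => by linear_combination (hsub z hz + hadd z hz) / 2, fun z hz => ?_⟩
  have hRz : R (conj z) = R 0 := by
    have hz' : 0 ≤ (conj z).im := by simpa using hz
    linear_combination (hadd (conj z) hz' - hsub (conj z) hz') / 2
  simpa [R] using congrArg conj hRz

end HalfPlaneSublinear

theorem stmt2_general (q : ℝ) (Ψ : ℂ → ℂ)
    (φp φm fp fm : ℂ → ℂ)
    (hφp : WHCandidate 1 φp) (hφm : WHCandidate (-1) φm)
    (hφfact : ∀ z : ℝ, (q : ℂ) / (q + Ψ z) = φp z * φm z)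
    (hfp : WHCandidate 1 fp) (hfm : WHCandidate (-1) fm)
    (hffact : ∀ z : ℝ, (q : ℂ) / (q + Ψ z) = fp z * fm z) :
    (∀ z : ℂ, 0 ≤ z.im → fp z = φp z) ∧ (∀ z : ℂ, z.im ≤ 0 → fm z = φm z) := by
  obtain ⟨gp, hgp, hgp0, hgp_exp⟩ := hfp.exists_log
  obtain ⟨gP, hgP, hgP0, hgP_exp⟩ := hφp.exists_log
  obtain ⟨gm, hgm, hgm0, hgm_exp⟩ := hfm.exists_log
  obtain ⟨gM, hgM, hgM0, hgM_exp⟩ := hφm.exists_log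
  have hreal : ∀ x : ℝ, gp x - gP x = gM x - gm x := by
    refine Continuous.eq_of_exp_eq ?_ ?_ (fun x => ?_) (x₀ := 0)
      (by simp [hgp0, hgP0, hgm0, hgM0])
    · exact (hgp.sub hgP).continuousOn.comp_continuous continuous_ofReal (by simp)
    · exact (hgM.sub hgm).continuousOn.comp_continuous continuous_ofReal (by simp)
    · rw [exp_sub, exp_sub, div_eq_div_iff (exp_ne_zero _) (exp_ne_zero _), hgp_exp _ (by simp),
        hgP_exp _ (by simp), hgM_exp _ (by simp), hgm_exp _ (by simp), ← hffact, hφfact,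
        mul_comm]
  obtain ⟨hA, hB⟩ := (hgp.sub hgP).apply_eq_apply_zero_of_eq_ofReal (hgM.sub hgm) hreal
  refine ⟨fun z hz => ?_, fun z hz => ?_⟩
  · have hlog : gp z = gP z := sub_eq_zero.mp (by simpa [hgp0, hgP0] using hA z hz)
    rw [← hgp_exp z (by simpa using hz), ← hgP_exp z (by simpa using hz), hlog]
  · have hlog : gm z = gM z := (sub_eq_zero.mp (by simpa [hgm0, hgM0] using hB z hz)).symm
    rw [← hgm_exp z (by simpa using hz), ← hgM_exp z (by simpa using hz), hlog]

/-- Uniqueness in the Wiener--Hopf factorization: if `φ⁺, φ⁻` are the Wiener--Hopf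
factors of a Lévy process with characteristic exponent `Ψ` (satisfying the listed
analytic properties, which they do) and `f⁺, f⁻` satisfy the same properties together
with the factorization identity `q/(q+Ψ z) = f⁺ z * f⁻ z` for real `z`, then
`f⁺ ≡ φ⁺` on the closed upper half-plane and `f⁻ ≡ φ⁻` on the closed lower one. -/
theorem stmt2 (q : ℝ) (hq : 0 < q) (Ψ : ℂ → ℂ)
    (φp φm fp fm : ℂ → ℂ)
    (hφp : WHCandidate 1 φp) (hφm : WHCandidate (-1) φm)
    (hφfact : ∀ z : ℝ, (q : ℂ) / (q + Ψ z) = φp z * φm z)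
    (hfp : WHCandidate 1 fp) (hfm : WHCandidate (-1) fm)
    (hffact : ∀ z : ℝ, (q : ℂ) / (q + Ψ z) = fp z * fm z) :
    (∀ z : ℂ, 0 ≤ z.im → fp z = φp z) ∧ (∀ z : ℂ, z.im ≤ 0 → fm z = φm z) :=
  stmt2_general q Ψ φp φm fp fm hφp hφm hφfact hfp hfm hffact
end

section
/- Let m = ⌊M⌋ for M > 0, and ε₁ > 0. Then the sum ∑_{n=1}^{m} 1/(n^{ε₁}(m+1−n)) tends to 0 as m → ∞. -/
/-!
Split the sum at `k = ⌊√m⌋`. The `k` terms with `n ≤ k` have `m + 1 - n ≥ m + 1 - k`, so they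
contribute `O(1/√m)`. For `n > k` we have `n ^ ε ≥ m ^ (ε / 2)`, and what remains is the
reflected harmonic sum `∑ 1 / (m + 1 - n) ≤ 1 + log m`, which `m ^ (ε / 2)` beats.
-/

open Filter Real Finset

lemma sum_Ioc_one_div_add_one_sub_le_one_add_log (m : ℕ) :
    ∑ n ∈ Ioc 0 m, 1 / ((m : ℝ) + 1 - n) ≤ 1 + log m := by
  have reflect : ∑ n ∈ Ioc 0 m, 1 / ((m : ℝ) + 1 - n) = ∑ d ∈ Icc 1 m, (d : ℝ)⁻¹ := by
    refine sum_nbij' (fun n => m + 1 - n) (fun d => m + 1 - d) ?_ ?_ ?_ ?_ ?_ <;>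
      intro n hn <;> simp only [mem_Ioc, mem_Icc] at hn ⊢
    any_goals omega
    rw [Nat.cast_sub (by omega), one_div]
    push_cast
    ring_nf
  have harmonic_le := harmonic_le_one_add_log m
  rw [harmonic_eq_sum_Icc] at harmonic_le
  push_cast at harmonic_le
  rw [reflect]
  exact harmonic_le

section

variable {ε : ℝ} {k m : ℕ}

lemma sum_Ioc_zero_one_div_rpow_mul_le (hε : 0 ≤ ε) (hk : k ≤ m) :
    ∑ n ∈ Ioc 0 k, 1 / ((n : ℝ) ^ ε * ((m : ℝ) + 1 - n)) ≤ k / ((m : ℝ) + 1 - k) := by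
  have hkm : (k : ℝ) ≤ m := by exact_mod_cast hk
  have bound : ∀ n ∈ Ioc 0 k, 1 / ((n : ℝ) ^ ε * ((m : ℝ) + 1 - n)) ≤ 1 / ((m : ℝ) + 1 - k) := by
    intro n hn
    obtain ⟨hn0, hnk⟩ := mem_Ioc.mp hn
    have hnk' : (n : ℝ) ≤ k := by exact_mod_cast hnk
    apply one_div_le_one_div_of_le (by linarith)
    calc (m : ℝ) + 1 - k ≤ 1 * ((m : ℝ) + 1 - n) := by linarith
      _ ≤ (n : ℝ) ^ ε * ((m : ℝ) + 1 - n) := by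
        gcongr
        · linarith
        · exact one_le_rpow (by exact_mod_cast hn0) hε
  calc _ ≤ #(Ioc 0 k) • (1 / ((m : ℝ) + 1 - k)) := sum_le_card_nsmul _ _ _ bound
    _ = k / ((m : ℝ) + 1 - k) := by simp [div_eq_mul_inv]

lemma sum_Ioc_one_div_rpow_mul_le (hε : 0 ≤ ε) :
    ∑ n ∈ Ioc k m, 1 / ((n : ℝ) ^ ε * ((m : ℝ) + 1 - n)) ≤ (1 + log m) / ((k : ℝ) + 1) ^ ε := by
  have bound : ∀ n ∈ Ioc k m,
      1 / ((n : ℝ) ^ ε * ((m : ℝ) + 1 - n)) ≤ 1 / ((m : ℝ) + 1 - n) / ((k : ℝ) + 1) ^ ε := by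
    intro n hn
    obtain ⟨hkn, hnm⟩ := mem_Ioc.mp hn
    have hnm' : (n : ℝ) ≤ m := by exact_mod_cast hnm
    rw [div_div, mul_comm ((m : ℝ) + 1 - n)]
    apply one_div_le_one_div_of_le (mul_pos (by positivity) (by linarith))
    gcongr
    · linarith
    · exact_mod_cast hkn
  have nonneg : ∀ n ∈ Ioc 0 m, n ∉ Ioc k m → 0 ≤ 1 / ((m : ℝ) + 1 - n) := by
    intro n hn _
    have : (n : ℝ) ≤ m := by exact_mod_cast (mem_Ioc.mp hn).2
    exact div_nonneg zero_le_one (by linarith)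
  calc _ ≤ ∑ n ∈ Ioc k m, 1 / ((m : ℝ) + 1 - n) / ((k : ℝ) + 1) ^ ε := sum_le_sum bound
    _ = (∑ n ∈ Ioc k m, 1 / ((m : ℝ) + 1 - n)) / ((k : ℝ) + 1) ^ ε := (sum_div ..).symm
    _ ≤ (∑ n ∈ Ioc 0 m, 1 / ((m : ℝ) + 1 - n)) / ((k : ℝ) + 1) ^ ε := by
      refine div_le_div_of_nonneg_right ?_ (by positivity)
      exact sum_le_sum_of_subset_of_nonneg (Ioc_subset_Ioc_left k.zero_le) nonneg
    _ ≤ (1 + log m) / ((k : ℝ) + 1) ^ ε := by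
      refine div_le_div_of_nonneg_right ?_ (by positivity)
      exact sum_Ioc_one_div_add_one_sub_le_one_add_log m

lemma sum_Icc_one_div_rpow_mul_le (hε : 0 ≤ ε) (hk : k ≤ m) :
    ∑ n ∈ Icc 1 m, 1 / ((n : ℝ) ^ ε * ((m : ℝ) + 1 - n)) ≤
      k / ((m : ℝ) + 1 - k) + (1 + log m) / ((k : ℝ) + 1) ^ ε := by
  rw [show Icc 1 m = Ioc 0 m from Icc_add_one_left_eq_Ioc 0 m,
    ← sum_Ioc_consecutive _ k.zero_le hk]
  exact add_le_add (sum_Ioc_zero_one_div_rpow_mul_le hε hk) (sum_Ioc_one_div_rpow_mul_le hε)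

lemma nat_sqrt_div_add_one_sub_le (hm : 0 < m) :
    (Nat.sqrt m : ℝ) / ((m : ℝ) + 1 - Nat.sqrt m) ≤ 2 / √m := by
  have hk := Real.nat_sqrt_le_real_sqrt (a := m)
  have hsq : √(m : ℝ) ^ 2 = m := sq_sqrt m.cast_nonneg
  have hpos : 0 < √(m : ℝ) := sqrt_pos.mpr (by exact_mod_cast hm)
  rw [div_le_div_iff₀ (by nlinarith [sq_nonneg (√(m : ℝ) - 1)]) hpos]
  nlinarith [sq_nonneg (√(m : ℝ) - 1), (Nat.sqrt m).cast_nonneg (α := ℝ)]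

lemma rpow_half_le_nat_sqrt_add_one_rpow (hε : 0 ≤ ε) (m : ℕ) :
    (m : ℝ) ^ (ε / 2) ≤ ((Nat.sqrt m : ℝ) + 1) ^ ε := by
  calc (m : ℝ) ^ (ε / 2) = √(m : ℝ) ^ ε := by
        rw [sqrt_eq_rpow, ← rpow_mul m.cast_nonneg]
        ring_nf
    _ ≤ ((Nat.sqrt m : ℝ) + 1) ^ ε :=
        rpow_le_rpow (sqrt_nonneg _) Real.real_sqrt_lt_nat_sqrt_succ.le hε

lemma sum_Icc_one_div_rpow_mul_le_two_div_sqrt_add (hε : 0 ≤ ε) (hm : 0 < m) :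
    ∑ n ∈ Icc 1 m, 1 / ((n : ℝ) ^ ε * ((m : ℝ) + 1 - n)) ≤
      2 / √m + (1 + log m) / (m : ℝ) ^ (ε / 2) := by
  have hlog : 0 ≤ 1 + log m := add_nonneg zero_le_one (log_natCast_nonneg m)
  calc _ ≤ _ := sum_Icc_one_div_rpow_mul_le hε (Nat.sqrt_le_self m)
    _ ≤ _ := add_le_add (nat_sqrt_div_add_one_sub_le hm) <|
      div_le_div_of_nonneg_left hlog (by positivity) (rpow_half_le_nat_sqrt_add_one_rpow hε m)

end

lemma tendsto_two_div_sqrt_add_one_add_log_div_rpow {r : ℝ} (hr : 0 < r) :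
    Tendsto (fun x : ℝ => 2 / √x + (1 + log x) / x ^ r) atTop (nhds 0) := by
  have sqrt_part : Tendsto (fun x : ℝ => 2 / √x) atTop (nhds 0) :=
    tendsto_const_nhds.div_atTop tendsto_sqrt_atTop
  have log_part : Tendsto (fun x : ℝ => (1 + log x) / x ^ r) atTop (nhds 0) := by
    have one_isLittleO : (fun _ : ℝ => (1 : ℝ)) =o[atTop] fun x => x ^ r :=
      Asymptotics.isLittleO_const_left.mpr <| .inr <|
        tendsto_norm_atTop_atTop.comp (tendsto_rpow_atTop hr)
    exact (one_isLittleO.add (isLittleO_log_rpow_atTop hr)).tendsto_div_nhds_zero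
  simpa using sqrt_part.add log_part

/-- The sum `∑_{n=1}^m 1/(n^{ε₁}(m+1-n))` tends to `0` as `m → ∞`. -/
theorem stmt4 (ε₁ : ℝ) (hε₁ : 0 < ε₁) :
    Tendsto (fun m : ℕ => ∑ n ∈ Finset.Icc 1 m, 1 / ((n : ℝ) ^ ε₁ * ((m : ℝ) + 1 - n)))
      atTop (nhds 0) := by
  refine tendsto_of_tendsto_of_tendsto_of_le_of_le' tendsto_const_nhds
    ((tendsto_two_div_sqrt_add_one_add_log_div_rpow (half_pos hε₁)).comp
      tendsto_natCast_atTop_atTop) ?_ ?_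
  · refine Eventually.of_forall fun m => sum_nonneg fun n hn => ?_
    have : (n : ℝ) ≤ m := by exact_mod_cast (mem_Icc.mp hn).2
    exact div_nonneg zero_le_one (mul_nonneg (by positivity) (by linarith))
  · filter_upwards [eventually_gt_atTop 0] with m hm
    exact sum_Icc_one_div_rpow_mul_le_two_div_sqrt_add hε₁.le hm
end

section
/- For real x > 0 and real α with |α| < 1, the integral ∫₀^∞ (e^{izx} − 1 − izx)·e^{αx}/sinh(x/2)² dx equals 4·∑_{n≥1} [ (α+iz)/(n−α−iz) − (α+iz)/(n−α) − iαz/(n−α)² ] for every real z. -/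
open Real Complex

/-!
For `x > 0` one has `1 / sinh (x / 2) ^ 2 = 4 ∑_{n ≥ 1} n e^{-n x}`, so the integrand expands
into the terms `4 n (e^{izx} - 1 - izx) e^{-(n - α) x}`. Each term integrates in closed form
through `∫₀^∞ e^{(iz - b) x} dx = 1 / (b - iz)` and the Gamma integrals
`∫₀^∞ x^k e^{-b x} dx = k! / b^{k+1}`. The bound `|e^{it} - 1 - it| ≤ 2 t²` makes the `L¹`
norm of the `n`-th term `O(z² / n²)`, which justifies integrating term by term.
-/

open MeasureTheory Set

theorem norm_cexp_I_mul_sub_one_sub_I_mul_le (t : ℝ) :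
    ‖cexp (I * t) - 1 - I * t‖ ≤ 2 * t ^ 2 := by
  rcases le_or_gt |t| 1 with ht | ht
  · have h := Complex.norm_exp_sub_one_sub_id_le (x := I * t) (by simpa using ht)
    simp only [norm_mul, norm_I, one_mul, norm_real, norm_eq_abs, sq_abs] at h
    nlinarith [sq_nonneg t]
  · calc ‖cexp (I * t) - 1 - I * t‖ ≤ ‖cexp (I * t) - 1‖ + ‖I * t‖ := norm_sub_le _ _
      _ ≤ |t| + |t| := by
        gcongr
        · simpa using Real.norm_exp_I_mul_ofReal_sub_one_le (x := t)
        · simp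
      _ ≤ 2 * t ^ 2 := by nlinarith [sq_abs t]

theorem integrableOn_pow_mul_exp_neg_mul_Ioi (k : ℕ) {b : ℝ} (hb : 0 < b) :
    IntegrableOn (fun x : ℝ => x ^ k * Real.exp (-(b * x))) (Ioi 0) := by
  refine (integrableOn_rpow_mul_exp_neg_mul_rpow (s := k) (p := 1)
    (by linarith [k.cast_nonneg (α := ℝ)]) one_pos hb).congr_fun (fun x _ => ?_)
    measurableSet_Ioi
  simp [Real.rpow_natCast]

theorem integral_pow_mul_exp_neg_mul_Ioi (k : ℕ) {b : ℝ} (hb : 0 < b) :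
    ∫ x in Ioi (0 : ℝ), x ^ k * Real.exp (-(b * x)) = k.factorial / b ^ (k + 1) := by
  have h := Real.integral_rpow_mul_exp_neg_mul_Ioi (a := k + 1) (by positivity) hb
  rw [Real.Gamma_nat_eq_factorial, add_sub_cancel_right] at h
  simp_rw [Real.rpow_natCast] at h
  rw [h]
  norm_cast
  rw [div_pow, one_pow]; field_simp

theorem hasSum_inv_sinh_sq {x : ℝ} (hx : 0 < x) :
    HasSum (fun n : ℕ => 4 * (n + 1) * Real.exp (-((n + 1) * x)))
      (Real.sinh (x / 2) ^ 2)⁻¹ := by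
  have hr : ‖Real.exp (-x)‖ < 1 := by
    rw [norm_of_nonneg (Real.exp_pos _).le, Real.exp_lt_one_iff]; linarith
  have h := ((hasSum_nat_add_iff (f := fun n : ℕ => (n : ℝ) * Real.exp (-x) ^ n) 1).mpr
    (by simpa using hasSum_coe_mul_geometric_of_norm_lt_one hr)).mul_left 4
  have hterm (n : ℕ) : 4 * (((n + 1 : ℕ) : ℝ) * Real.exp (-x) ^ (n + 1))
      = 4 * (n + 1) * Real.exp (-((n + 1) * x)) := by
    rw [← Real.exp_nat_mul]; push_cast; ring_nf
  simp only [hterm] at h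
  suffices hval : (Real.sinh (x / 2) ^ 2)⁻¹ = 4 * (Real.exp (-x) / (1 - Real.exp (-x)) ^ 2) by
    rwa [hval]
  have hu : 1 < Real.exp (x / 2) := Real.one_lt_exp_iff.mpr (by linarith)
  have hu2 : Real.exp (x / 2) ^ 2 - 1 ≠ 0 := by nlinarith
  rw [show -x = -(x / 2) + -(x / 2) by ring, Real.exp_add, Real.sinh_eq, Real.exp_neg]
  field_simp
  ring

theorem hasSum_exp_mul_div_sinh_sq (α : ℝ) {x : ℝ} (hx : 0 < x) :
    HasSum (fun n : ℕ => 4 * (n + 1) * Real.exp (-((n + 1 - α) * x)))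
      (Real.exp (α * x) / Real.sinh (x / 2) ^ 2) := by
  have hterm (n : ℕ) : Real.exp (α * x) * (4 * (n + 1) * Real.exp (-((n + 1) * x)))
      = 4 * (n + 1) * Real.exp (-((n + 1 - α) * x)) := by
    rw [mul_left_comm, ← Real.exp_add]; ring_nf
  simpa only [hterm, div_eq_mul_inv] using (hasSum_inv_sinh_sq hx).mul_left (Real.exp (α * x))

section

variable (z : ℝ) {b : ℝ}

-- Stated with `x ^ 0` and `x ^ 1` so that the real pieces are literally Gamma integrands.
theorem cexp_I_mul_sub_one_sub_mul_exp_neg_mul_eq (x : ℝ) :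
    (cexp (I * z * x) - 1 - I * z * x) * (Real.exp (-(b * x)) : ℂ)
      = cexp ((I * z - b) * x) - ((x ^ 0 * Real.exp (-(b * x)) : ℝ) : ℂ)
        - I * z * ((x ^ 1 * Real.exp (-(b * x)) : ℝ) : ℂ) := by
  rw [show (I * z - b) * x = I * z * x + -(b * x) by ring, Complex.exp_add]
  push_cast
  ring

variable (hb : 0 < b)
include hb

theorem integrableOn_cexp_I_mul_sub_one_sub_mul_exp_neg_mul :
    IntegrableOn (fun x : ℝ => (cexp (I * z * x) - 1 - I * z * x) * (Real.exp (-(b * x)) : ℂ))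
      (Ioi 0) := by
  simp_rw [cexp_I_mul_sub_one_sub_mul_exp_neg_mul_eq]
  exact ((integrableOn_exp_mul_complex_Ioi (by simpa using hb) 0).sub
    (integrableOn_pow_mul_exp_neg_mul_Ioi 0 hb).ofReal).sub
    ((integrableOn_pow_mul_exp_neg_mul_Ioi 1 hb).ofReal.const_mul _)

theorem integral_cexp_I_mul_sub_one_sub_mul_exp_neg_mul :
    ∫ x in Ioi (0 : ℝ), (cexp (I * z * x) - 1 - I * z * x) * (Real.exp (-(b * x)) : ℂ)
      = 1 / (b - I * z) - 1 / b - I * z / b ^ 2 := by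
  have hre : (I * z - b).re < 0 := by simpa using hb
  have h₁ := integrableOn_exp_mul_complex_Ioi hre 0
  have h₂ : IntegrableOn (fun x : ℝ => ((x ^ 0 * Real.exp (-(b * x)) : ℝ) : ℂ)) (Ioi 0) :=
    (integrableOn_pow_mul_exp_neg_mul_Ioi 0 hb).ofReal
  have h₃ : IntegrableOn (fun x : ℝ => I * z * ((x ^ 1 * Real.exp (-(b * x)) : ℝ) : ℂ))
      (Ioi 0) :=
    (integrableOn_pow_mul_exp_neg_mul_Ioi 1 hb).ofReal.const_mul _
  simp_rw [cexp_I_mul_sub_one_sub_mul_exp_neg_mul_eq]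
  rw [integral_sub (by exact h₁.sub h₂) h₃, integral_sub h₁ h₂, integral_const_mul,
    integral_complex_ofReal, integral_complex_ofReal, integral_exp_mul_complex_Ioi hre,
    integral_pow_mul_exp_neg_mul_Ioi 0 hb, integral_pow_mul_exp_neg_mul_Ioi 1 hb]
  have hb' : (b : ℂ) ≠ 0 := by exact_mod_cast hb.ne'
  have hzb : I * z - (b : ℂ) ≠ 0 := fun h => by simp [h] at hre
  have hbz : (b : ℂ) - I * z ≠ 0 := by rwa [← neg_sub, neg_ne_zero]
  push_cast
  rw [mul_zero, Complex.exp_zero]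
  field_simp
  ring

theorem integral_norm_cexp_I_mul_sub_one_sub_mul_exp_neg_mul_le :
    ∫ x in Ioi (0 : ℝ), ‖(cexp (I * z * x) - 1 - I * z * x) * (Real.exp (-(b * x)) : ℂ)‖
      ≤ 4 * z ^ 2 / b ^ 3 := by
  have hbound (x : ℝ) : ‖(cexp (I * z * x) - 1 - I * z * x) * (Real.exp (-(b * x)) : ℂ)‖
      ≤ 2 * z ^ 2 * (x ^ 2 * Real.exp (-(b * x))) := by
    have h := norm_cexp_I_mul_sub_one_sub_I_mul_le (z * x)
    push_cast at h
    rw [norm_mul, norm_real, norm_of_nonneg (Real.exp_pos _).le, mul_assoc I]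
    calc _ ≤ 2 * (z * x) ^ 2 * Real.exp (-(b * x)) := by gcongr
      _ = _ := by ring
  calc _ ≤ ∫ x in Ioi (0 : ℝ), 2 * z ^ 2 * (x ^ 2 * Real.exp (-(b * x))) :=
        integral_mono (integrableOn_cexp_I_mul_sub_one_sub_mul_exp_neg_mul z hb).norm
          ((integrableOn_pow_mul_exp_neg_mul_Ioi 2 hb).const_mul _) hbound
    _ = 4 * z ^ 2 / b ^ 3 := by
      rw [integral_const_mul, integral_pow_mul_exp_neg_mul_Ioi 2 hb, Nat.factorial_two]
      push_cast
      ring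

end

noncomputable def sinhSqSeriesTerm (α z : ℝ) (n : ℕ) (x : ℝ) : ℂ :=
  (cexp (I * z * x) - 1 - I * z * x) * (Real.exp (-((n + 1 - α) * x)) : ℂ) * (4 * (n + 1))

section

variable {α : ℝ} (z : ℝ)

theorem hasSum_sinhSqSeriesTerm {x : ℝ} (hx : 0 < x) :
    HasSum (fun n => sinhSqSeriesTerm α z n x)
      ((cexp (I * z * x) - 1 - I * z * x) * cexp (α * x) / (Real.sinh (x / 2) : ℂ) ^ 2) := by
  have h := (hasSum_ofReal.mpr (hasSum_exp_mul_div_sinh_sq α hx)).mul_left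
    (cexp (I * z * x) - 1 - I * z * x)
  have hterm (n : ℕ) : (cexp (I * z * x) - 1 - I * z * x)
      * ((4 * (n + 1) * Real.exp (-((n + 1 - α) * x)) : ℝ) : ℂ)
      = sinhSqSeriesTerm α z n x := by
    simp only [sinhSqSeriesTerm]; push_cast; ring
  have hval : (cexp (I * z * x) - 1 - I * z * x) * cexp (α * x) / (Real.sinh (x / 2) : ℂ) ^ 2
      = (cexp (I * z * x) - 1 - I * z * x)
        * ((Real.exp (α * x) / Real.sinh (x / 2) ^ 2 : ℝ) : ℂ) := by
    push_cast; ring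
  simpa only [hval, hterm] using h

theorem integrableOn_sinhSqSeriesTerm {n : ℕ} (hb : 0 < (n : ℝ) + 1 - α) :
    IntegrableOn (sinhSqSeriesTerm α z n) (Ioi 0) :=
  (integrableOn_cexp_I_mul_sub_one_sub_mul_exp_neg_mul z hb).mul_const _

theorem integral_sinhSqSeriesTerm {n : ℕ} (hb : 0 < (n : ℝ) + 1 - α) :
    ∫ x in Ioi (0 : ℝ), sinhSqSeriesTerm α z n x
      = 4 * ((α + I * z) / (n + 1 - α - I * z) - (α + I * z) / (n + 1 - α)
        - I * α * z / (n + 1 - α) ^ 2) := by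
  unfold sinhSqSeriesTerm
  rw [integral_mul_const, integral_cexp_I_mul_sub_one_sub_mul_exp_neg_mul z hb]
  have hb' : (n + 1 - α : ℂ) ≠ 0 := by exact_mod_cast hb.ne'
  have hbz : (n + 1 - α : ℂ) - I * z ≠ 0 := fun h => by
    simpa [hb.ne'] using congrArg Complex.re h
  push_cast
  field_simp
  ring

theorem summable_integral_norm_sinhSqSeriesTerm (hα : α < 1) :
    Summable fun n : ℕ => ∫ x in Ioi (0 : ℝ), ‖sinhSqSeriesTerm α z n x‖ := by
  set δ := min 1 (1 - α)
  have hδ : 0 < δ := lt_min one_pos (by linarith)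
  have hb (n : ℕ) : δ * (n + 1) ≤ n + 1 - α := by
    rcases le_total 0 α with h | h
    · nlinarith [min_le_right 1 (1 - α), n.cast_nonneg (α := ℝ)]
    · nlinarith [min_le_left 1 (1 - α), n.cast_nonneg (α := ℝ)]
  refine Summable.of_nonneg_of_le (fun n => integral_nonneg fun x => norm_nonneg _) (fun n => ?_)
    (((summable_nat_add_iff 1).mpr (Real.summable_one_div_nat_pow.mpr one_lt_two)).mul_left
      (16 * z ^ 2 / δ ^ 3))
  have hpos : 0 < (n : ℝ) + 1 := by positivity
  have hcast : ‖(4 * (n + 1) : ℂ)‖ = 4 * (n + 1) := by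
    rw [show (4 * (n + 1) : ℂ) = ((4 * (n + 1) : ℝ) : ℂ) by push_cast; ring, norm_real,
      norm_of_nonneg (by positivity)]
  simp_rw [sinhSqSeriesTerm, norm_mul _ (4 * _ : ℂ), hcast, integral_mul_const]
  calc _ ≤ 4 * z ^ 2 / (n + 1 - α) ^ 3 * (4 * (n + 1)) := by
        gcongr
        exact integral_norm_cexp_I_mul_sub_one_sub_mul_exp_neg_mul_le z
          (by linarith [hb n, mul_pos hδ hpos])
    _ ≤ 4 * z ^ 2 / (δ * (n + 1)) ^ 3 * (4 * (n + 1)) := by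
        gcongr
        exact hb n
    _ = _ := by push_cast; field_simp; ring

end

/-- For real `α` with `|α| < 1` and every real `z`,
`∫₀^∞ (e^{izx} - 1 - izx) e^{αx}/sinh(x/2)² dx
  = 4 ∑_{n≥1} [(α+iz)/(n-α-iz) - (α+iz)/(n-α) - iαz/(n-α)²]`. -/
theorem stmt6 (α : ℝ) (hα : |α| < 1) (z : ℝ) :
    ∫ x in Set.Ioi (0 : ℝ),
      (Complex.exp (Complex.I * z * x) - 1 - Complex.I * z * x) * Complex.exp ((α : ℂ) * x)
        / ((Real.sinh (x / 2) : ℂ)) ^ 2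
    = 4 * ∑' n : ℕ,
        (((α : ℂ) + Complex.I * z) / ((n : ℂ) + 1 - α - Complex.I * z)
          - ((α : ℂ) + Complex.I * z) / ((n : ℂ) + 1 - α)
          - Complex.I * α * z / ((n : ℂ) + 1 - α) ^ 2) := by
  have hα₁ : α < 1 := (le_abs_self α).trans_lt hα
  have hb (n : ℕ) : 0 < (n : ℝ) + 1 - α := by linarith [n.cast_nonneg (α := ℝ)]
  calc _ = ∫ x in Ioi (0 : ℝ), ∑' n, sinhSqSeriesTerm α z n x :=
        setIntegral_congr_fun measurableSet_Ioi fun x hx =>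
          (hasSum_sinhSqSeriesTerm z hx).tsum_eq.symm
    _ = ∑' n, ∫ x in Ioi (0 : ℝ), sinhSqSeriesTerm α z n x :=
        (integral_tsum_of_summable_integral_norm (fun n => integrableOn_sinhSqSeriesTerm z (hb n))
          (summable_integral_norm_sinhSqSeriesTerm z hα₁)).symm
    _ = _ := by
      rw [← tsum_mul_left]
      exact tsum_congr fun n => integral_sinhSqSeriesTerm z (hb n)
end

section
/- With Ψ as in the previous context and q > 0, for every integer n ≥ 1 the equation q + Ψ(iζ) = 0 has at least one real solution in the interval (n+α, n+α+1), and for every integer n ≤ −1 at least one real solution in the interval (n+α−1, n+α). -/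
/-!
On the imaginary axis `q + Ψ(iζ)` is real: with `x = ζ - α` it equals a polynomial in `x` plus
`4π x cot(π x)`. On `(k, k + 1)` the cotangent runs from `+∞` down to `-∞`; when `k` and `k + 1`
have the same sign (`k ≠ 0, -1`) the factor `x` does not change sign there, so `x cot(π x)` tends to
infinities of opposite signs at the two ends, the polynomial part stays bounded near them, and the
intermediate value theorem yields a root.
-/

open Filter Set Topology

theorem tendsto_const_mul_sub_nhdsGT {c : ℝ} (hc : 0 < c) (a : ℝ) :
    Tendsto (fun x => c * (x - a)) (𝓝[>] a) (𝓝[>] 0) := by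
  refine tendsto_nhdsWithin_iff.2 ⟨?_, ?_⟩
  · exact ((continuous_const.mul (continuous_id.sub continuous_const)).tendsto' a 0
      (by simp)).mono_left nhdsWithin_le_nhds
  · filter_upwards [self_mem_nhdsWithin] with x hx using mul_pos hc (sub_pos.2 hx)

theorem tendsto_const_mul_sub_nhdsLT {c : ℝ} (hc : 0 < c) (a : ℝ) :
    Tendsto (fun x => c * (x - a)) (𝓝[<] a) (𝓝[<] 0) := by
  refine tendsto_nhdsWithin_iff.2 ⟨?_, ?_⟩
  · exact ((continuous_const.mul (continuous_id.sub continuous_const)).tendsto' a 0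
      (by simp)).mono_left nhdsWithin_le_nhds
  · filter_upwards [self_mem_nhdsWithin] with x hx using mul_neg_of_pos_of_neg hc (sub_neg.2 hx)

namespace Real

theorem cot_sub_int_mul_pi (x : ℝ) (n : ℤ) : cot (x - n * π) = cot x := by
  rw [cot_eq_cos_div_sin, cot_eq_cos_div_sin, cos_sub_int_mul_pi, sin_sub_int_mul_pi,
    mul_div_mul_left _ _ (zpow_ne_zero n (by norm_num))]

theorem tendsto_cot_nhdsGT_zero : Tendsto cot (𝓝[>] 0) atTop := by
  have hsin : Tendsto sin (𝓝[>] 0) (𝓝[>] 0) := by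
    refine tendsto_nhdsWithin_iff.2 ⟨?_, ?_⟩
    · simpa using continuous_sin.continuousWithinAt.tendsto (s := Ioi 0) (x := 0)
    · filter_upwards [Ioo_mem_nhdsGT pi_pos] with x hx using sin_pos_of_pos_of_lt_pi hx.1 hx.2
  have hcos : Tendsto cos (𝓝[>] 0) (𝓝 1) := by
    simpa using continuous_cos.continuousWithinAt.tendsto (s := Ioi 0) (x := 0)
  exact (hcos.pos_mul_atTop one_pos (tendsto_inv_nhdsGT_zero.comp hsin)).congr fun x =>
    (cot_eq_cos_div_sin x).symm

theorem tendsto_cot_nhdsLT_zero : Tendsto cot (𝓝[<] 0) atBot := by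
  have hsin : Tendsto sin (𝓝[<] 0) (𝓝[<] 0) := by
    refine tendsto_nhdsWithin_iff.2 ⟨?_, ?_⟩
    · simpa using continuous_sin.continuousWithinAt.tendsto (s := Iio 0) (x := 0)
    · filter_upwards [Ioo_mem_nhdsLT (neg_lt_zero.2 pi_pos)] with x hx using
        sin_neg_of_neg_of_neg_pi_lt hx.2 hx.1
  have hcos : Tendsto cos (𝓝[<] 0) (𝓝 1) := by
    simpa using continuous_cos.continuousWithinAt.tendsto (s := Iio 0) (x := 0)
  exact (hcos.pos_mul_atBot one_pos (tendsto_inv_nhdsLT_zero.comp hsin)).congr fun x =>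
    (cot_eq_cos_div_sin x).symm

theorem cot_pi_mul_sub_int (x : ℝ) (k : ℤ) : cot (π * (x - k)) = cot (π * x) := by
  rw [mul_sub, mul_comm π (k : ℝ), cot_sub_int_mul_pi]

theorem tendsto_cot_pi_mul_nhdsGT_int (k : ℤ) :
    Tendsto (fun x => cot (π * x)) (𝓝[>] (k : ℝ)) atTop :=
  (tendsto_cot_nhdsGT_zero.comp (tendsto_const_mul_sub_nhdsGT pi_pos _)).congr fun x =>
    cot_pi_mul_sub_int x k

theorem tendsto_cot_pi_mul_nhdsLT_int (k : ℤ) :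
    Tendsto (fun x => cot (π * x)) (𝓝[<] (k : ℝ)) atBot :=
  (tendsto_cot_nhdsLT_zero.comp (tendsto_const_mul_sub_nhdsLT pi_pos _)).congr fun x =>
    cot_pi_mul_sub_int x k

theorem sin_pi_mul_ne_zero_of_mem_Ioo {k : ℤ} {x : ℝ} (hx : x ∈ Ioo (k : ℝ) (k + 1)) :
    sin (π * x) ≠ 0 := by
  rw [sin_ne_zero_iff]
  rintro n hn
  obtain rfl : (n : ℝ) = x := mul_right_cancel₀ pi_ne_zero (by rw [hn, mul_comm])
  have h1 : k < n := by exact_mod_cast hx.1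
  have h2 : n < k + 1 := by exact_mod_cast hx.2
  omega

theorem continuousOn_cot_pi_mul_Ioo (k : ℤ) :
    ContinuousOn (fun x => cot (π * x)) (Ioo (k : ℝ) (k + 1)) := by
  simp only [cot_eq_cos_div_sin]
  exact ContinuousOn.div (by fun_prop) (by fun_prop) fun x hx => sin_pi_mul_ne_zero_of_mem_Ioo hx

end Real

theorem exists_mem_Ioo_eq_zero_of_tendsto {f : ℝ → ℝ} {a b : ℝ} (hab : a < b)
    (hf : ContinuousOn f (Ioo a b)) (ha : Tendsto f (𝓝[>] a) atBot)
    (hb : Tendsto f (𝓝[<] b) atTop) : ∃ x ∈ Ioo a b, f x = 0 := by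
  rw [← nhdsWithin_Ioo_eq_nhdsGT hab] at ha
  rw [← nhdsWithin_Ioo_eq_nhdsLT hab] at hb
  have : (𝓝[Ioo a b] a).NeBot := left_nhdsWithin_Ioo_neBot hab
  have : (𝓝[Ioo a b] b).NeBot := right_nhdsWithin_Ioo_neBot hab
  exact isPreconnected_Ioo.intermediate_value_Iii (l₁ := 𝓝[Ioo a b] a) (l₂ := 𝓝[Ioo a b] b)
    inf_le_right inf_le_right hf ha hb (mem_univ 0)

open Real in
theorem exists_mem_Ioo_add_mul_mul_cot_eq_zero {g : ℝ → ℝ} (hg : Continuous g) {c : ℝ}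
    (hc : 0 < c) {k : ℤ} (hk : 0 < k ∨ k < -1) :
    ∃ x ∈ Ioo (k : ℝ) (k + 1), g x + c * (x * cot (π * x)) = 0 := by
  have hcont : ContinuousOn (fun x => g x + c * (x * cot (π * x))) (Ioo (k : ℝ) (k + 1)) :=
    hg.continuousOn.add <|
      continuousOn_const.mul (continuousOn_id.mul (continuousOn_cot_pi_mul_Ioo k))
  have hg_left : Tendsto g (𝓝[>] (k : ℝ)) (𝓝 (g k)) := (hg.tendsto _).mono_left nhdsWithin_le_nhds
  have hg_right : Tendsto g (𝓝[<] ((k : ℝ) + 1)) (𝓝 (g (k + 1))) :=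
    (hg.tendsto _).mono_left nhdsWithin_le_nhds
  have hid_left : Tendsto id (𝓝[>] (k : ℝ)) (𝓝 (k : ℝ)) := tendsto_id.mono_left nhdsWithin_le_nhds
  have hid_right : Tendsto id (𝓝[<] ((k : ℝ) + 1)) (𝓝 ((k : ℝ) + 1)) :=
    tendsto_id.mono_left nhdsWithin_le_nhds
  have hcot_left := tendsto_cot_pi_mul_nhdsGT_int k
  have hcot_right := tendsto_cot_pi_mul_nhdsLT_int (k + 1)
  push_cast at hcot_right
  have hlt : (k : ℝ) < k + 1 := lt_add_one _
  rcases hk with hk | hk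
  · have hk₀ : (0 : ℝ) < k := by exact_mod_cast hk
    have hk₁ : (0 : ℝ) < k + 1 := by linarith
    obtain ⟨x, hx, hfx⟩ := exists_mem_Ioo_eq_zero_of_tendsto hlt hcont.neg
      (tendsto_neg_atTop_atBot.comp <|
        hg_left.add_atTop ((hid_left.pos_mul_atTop hk₀ hcot_left).const_mul_atTop hc))
      (tendsto_neg_atBot_atTop.comp <|
        hg_right.add_atBot ((hid_right.pos_mul_atBot hk₁ hcot_right).const_mul_atBot hc))
    exact ⟨x, hx, neg_eq_zero.1 hfx⟩
  · have hk₀ : (k : ℝ) < 0 := by exact_mod_cast hk.trans (by norm_num)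
    have hk₁ : (k : ℝ) + 1 < 0 := by
      have : (k : ℝ) < -1 := by exact_mod_cast hk
      linarith
    exact exists_mem_Ioo_eq_zero_of_tendsto hlt hcont
      (hg_left.add_atBot ((hid_left.neg_mul_atTop hk₀ hcot_left).const_mul_atBot hc))
      (hg_right.add_atTop ((hid_right.neg_mul_atBot hk₁ hcot_right).const_mul_atTop hc))

namespace Complex

theorem I_mul_mul_cosh_div_sinh_I_mul (w : ℂ) :
    I * w * (cosh (I * w) / sinh (I * w)) = w * cot w := by
  rw [mul_comm I w, cosh_mul_I, sinh_mul_I, cot_eq_cos_div_sin, mul_div_assoc', mul_div_assoc',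
    mul_right_comm, mul_div_mul_right _ _ I_ne_zero]

end Complex

open Real Complex

theorem stmt9_general (σ α : ℝ) (q : ℝ) (γ ρ : ℝ) (Ψ : ℂ → ℂ)
    (hΨ : ∀ z : ℂ, Ψ z = (σ : ℂ) ^ 2 * z ^ 2 / 2 + Complex.I * ρ * z
      + 4 * π * (z - Complex.I * α)
          * (Complex.cosh ((π : ℂ) * (z - Complex.I * α))
              / Complex.sinh ((π : ℂ) * (z - Complex.I * α)))
      - 4 * γ) :
    ∀ n : ℤ,
      (1 ≤ n → ∃ ζ : ℝ, ζ ∈ Set.Ioo ((n : ℝ) + α) ((n : ℝ) + α + 1) ∧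
        (q : ℂ) + Ψ (Complex.I * ζ) = 0) ∧
      (n ≤ -1 → ∃ ζ : ℝ, ζ ∈ Set.Ioo ((n : ℝ) + α - 1) ((n : ℝ) + α) ∧
        (q : ℂ) + Ψ (Complex.I * ζ) = 0) := by
  have root (k : ℤ) (hk : 0 < k ∨ k < -1) :
      ∃ ζ ∈ Ioo ((k : ℝ) + α) (k + α + 1), (q : ℂ) + Ψ (I * ζ) = 0 := by
    obtain ⟨x, ⟨hx₁, hx₂⟩, hx⟩ := exists_mem_Ioo_add_mul_mul_cot_eq_zero
      (g := fun x => q - σ ^ 2 * (x + α) ^ 2 / 2 - ρ * (x + α) - 4 * γ) (by fun_prop)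
      (by positivity : 0 < 4 * π) hk
    refine ⟨x + α, ⟨by linarith, by linarith⟩, ?_⟩
    have hshift : (π : ℂ) * (I * ↑(x + α) - I * α) = I * ↑(π * x) := by push_cast; ring
    have key := I_mul_mul_cosh_div_sinh_I_mul ↑(π * x)
    rw [← ofReal_cot] at key
    rw [hΨ, hshift]
    have hx' := congrArg (fun r : ℝ => (r : ℂ)) hx
    push_cast at hx' key ⊢
    linear_combination hx' + 4 * key + ((σ : ℂ) ^ 2 * (x + α) ^ 2 / 2 + ρ * (x + α)) * I_sq
  intro n
  refine ⟨fun hn => root n (Or.inl hn), fun hn => ?_⟩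
  obtain ⟨ζ, ⟨hζ₁, hζ₂⟩, hζ⟩ := root (n - 1) (Or.inr (by omega))
  push_cast at hζ₁ hζ₂
  exact ⟨ζ, ⟨by linarith, by linarith⟩, hζ⟩

/-- For `Ψ` as before and `q > 0`: for every integer `n ≥ 1` the equation
`q + Ψ(iζ) = 0` has at least one real solution in `(n+α, n+α+1)`, and for every
integer `n ≤ -1` at least one in `(n+α-1, n+α)`. -/
theorem stmt9 (σ μ α : ℝ) (hα0 : 0 < |α|) (hα1 : |α| < 1) (q : ℝ) (hq : 0 < q)
    (γ ρ : ℝ) (hγ : γ = π * α * Real.cos (π * α) / Real.sin (π * α))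
    (hρ : ρ = 4 * π ^ 2 * α + 4 * γ * (γ - 1) / α - μ)
    (Ψ : ℂ → ℂ)
    (hΨ : ∀ z : ℂ, Ψ z = (σ : ℂ) ^ 2 * z ^ 2 / 2 + Complex.I * ρ * z
      + 4 * π * (z - Complex.I * α)
          * (Complex.cosh ((π : ℂ) * (z - Complex.I * α))
              / Complex.sinh ((π : ℂ) * (z - Complex.I * α)))
      - 4 * γ) :
    ∀ n : ℤ,
      (1 ≤ n → ∃ ζ : ℝ, ζ ∈ Set.Ioo ((n : ℝ) + α) ((n : ℝ) + α + 1) ∧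
        (q : ℂ) + Ψ (Complex.I * ζ) = 0) ∧
      (n ≤ -1 → ∃ ζ : ℝ, ζ ∈ Set.Ioo ((n : ℝ) + α - 1) ((n : ℝ) + α) ∧
        (q : ℂ) + Ψ (Complex.I * ζ) = 0) :=
  stmt9_general σ α q γ ρ Ψ hΨ
end

section
/- For real α, β > 0, c ≥ 0 and λ ∈ (0,1), and every real y, ∫₀^∞ (e^{ixy} − 1 − ixy)·e^{−αβx}/(1−e^{−βx})^{λ} dx = (1/β)[ B(α − iy/β, 1−λ) − B(α, 1−λ) ] − (iy/β²)·B(α,1−λ)·(ψ(1+α−λ) − ψ(α)), where B is the Beta function and ψ the digamma function. -/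
open Real Complex

/-- The Beta function `B(x,y) = Γ(x)Γ(y)/Γ(x+y)`. -/
noncomputable def cBeta (x y : ℂ) : ℂ := Complex.Gamma x * Complex.Gamma y / Complex.Gamma (x + y)

/-- The digamma function `ψ = Γ'/Γ`. -/
noncomputable def digamma (x : ℂ) : ℂ := deriv Complex.Gamma x / Complex.Gamma x

/-!
Substituting `u = e^{-βx}` turns `∫₀^∞ e^{-βsx} (1 - e^{-βx})^{-λ} dx` into `β⁻¹` times the Mellin
transform at `s` of `u ↦ (1 - u)^{-λ}` on `(0, 1)`, which is `B(s, 1 - λ)`. Writing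
`e^{ixy} e^{-αβx} = e^{-β(α - iy/β)x}` handles the first two terms of the integrand. The
compensating term `ixy = -(iy/β) log u` produces the Mellin transform of `log u · (1 - u)^{-λ}`,
which is the `s`-derivative of `B(s, 1 - λ) = Γ(s)Γ(1 - λ)/Γ(s + 1 - λ)`, namely
`B(s, 1 - λ)(ψ(s) - ψ(s + 1 - λ))`.
-/

open MeasureTheory Set Filter Asymptotics Topology

section ExpNegSubstitution

variable {E : Type*} [NormedAddCommGroup E] {β : ℝ}

lemma image_exp_neg_mul_Ioi (hβ : 0 < β) :
    (fun x => rexp (-(β * x))) '' Ioi 0 = Ioo 0 1 := by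
  ext u
  constructor
  · rintro ⟨x, hx, rfl⟩
    exact ⟨Real.exp_pos _, Real.exp_lt_one_iff.2 (neg_neg_of_pos (mul_pos hβ hx))⟩
  · rintro ⟨hu0, hu1⟩
    refine ⟨-Real.log u / β, div_pos (neg_pos.2 (Real.log_neg hu0 hu1)) hβ, ?_⟩
    simp only [mul_div_cancel₀ _ hβ.ne', neg_neg, Real.exp_log hu0]

lemma injOn_exp_neg_mul_Ioi (hβ : 0 < β) : InjOn (fun x => rexp (-(β * x))) (Ioi 0) :=
  fun _ _ _ _ h => mul_left_cancel₀ hβ.ne' (neg_injective (Real.exp_injective h))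

lemma hasDerivAt_exp_neg_mul (β x : ℝ) :
    HasDerivAt (fun x => rexp (-(β * x))) (-β * rexp (-(β * x))) x := by
  simpa [mul_comm] using ((hasDerivAt_id x).const_mul β).neg.exp

variable [NormedSpace ℝ E]

lemma integral_Ioo_zero_one_eq_integral_exp_neg_mul (hβ : 0 < β) (g : ℝ → E) :
    ∫ u in Ioo 0 1, g u = ∫ x in Ioi 0, (β * rexp (-(β * x))) • g (rexp (-(β * x))) := by
  rw [← image_exp_neg_mul_Ioi hβ, integral_image_eq_integral_abs_deriv_smul measurableSet_Ioi
    (fun x _ => (hasDerivAt_exp_neg_mul β x).hasDerivWithinAt) (injOn_exp_neg_mul_Ioi hβ)]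
  simp [abs_of_pos hβ]

lemma integrableOn_Ioo_zero_one_iff_exp_neg_mul (hβ : 0 < β) (g : ℝ → E) :
    IntegrableOn g (Ioo 0 1) ↔
      IntegrableOn (fun x => (β * rexp (-(β * x))) • g (rexp (-(β * x)))) (Ioi 0) := by
  rw [← image_exp_neg_mul_Ioi hβ, integrableOn_image_iff_integrableOn_abs_deriv_smul
    measurableSet_Ioi (fun x _ => (hasDerivAt_exp_neg_mul β x).hasDerivWithinAt)
    (injOn_exp_neg_mul_Ioi hβ)]
  simp [abs_of_pos hβ]

end ExpNegSubstitution

section MellinOfVanishingOnIci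

variable {E : Type*} [NormedAddCommGroup E] [NormedSpace ℂ E] {f : ℝ → E}

lemma mellin_eq_integral_Ioo_of_eq_zero (hf : ∀ t, 1 ≤ t → f t = 0) (s : ℂ) :
    mellin f s = ∫ t in Ioo (0 : ℝ) 1, (t : ℂ) ^ (s - 1) • f t :=
  setIntegral_eq_of_subset_of_forall_sdiff_eq_zero measurableSet_Ioi Ioo_subset_Ioi_self
    fun t ht => by rw [hf t (not_lt.1 fun h => ht.2 ⟨ht.1, h⟩), smul_zero]

lemma mellinConvergent_iff_integrableOn_Ioo_of_eq_zero (hf : ∀ t, 1 ≤ t → f t = 0) (s : ℂ) :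
    MellinConvergent f s ↔ IntegrableOn (fun t : ℝ => (t : ℂ) ^ (s - 1) • f t) (Ioo (0 : ℝ) 1) :=
  ⟨fun h => h.mono_set Ioo_subset_Ioi_self, fun h => h.of_forall_sdiff_eq_zero measurableSet_Ioi
    fun t ht => by rw [hf t (not_lt.1 fun h => ht.2 ⟨ht.1, h⟩), smul_zero]⟩

lemma smul_ofReal_exp_neg_mul_cpow (β x : ℝ) (s : ℂ) (z : E) :
    (β * rexp (-(β * x))) • ((rexp (-(β * x)) : ℂ) ^ (s - 1) • z)
      = β • (cexp (-(β * s * x)) • z) := by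
  have hcpow : ((rexp (-(β * x)) : ℂ)) ^ (s - 1) = cexp (-(β * x) * (s - 1)) := by
    rw [cpow_def_of_ne_zero (ofReal_ne_zero.2 (Real.exp_pos _).ne'),
      ← ofReal_log (Real.exp_pos _).le, Real.log_exp]
    push_cast; rfl
  rw [hcpow, ← Complex.coe_smul, ← Complex.coe_smul, smul_smul, smul_smul, ofReal_mul, ofReal_exp,
    mul_assoc, ← Complex.exp_add]
  push_cast
  ring_nf

variable {β : ℝ}

lemma integral_exp_neg_mul_eq_mellin (hβ : 0 < β) (hf : ∀ t, 1 ≤ t → f t = 0) (s : ℂ) :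
    ∫ x in Ioi (0 : ℝ), cexp (-(β * s * x)) • f (rexp (-(β * x))) = β⁻¹ • mellin f s := by
  rw [mellin_eq_integral_Ioo_of_eq_zero hf, integral_Ioo_zero_one_eq_integral_exp_neg_mul hβ]
  simp only [smul_ofReal_exp_neg_mul_cpow, integral_smul, inv_smul_smul₀ hβ.ne']

lemma mellinConvergent_iff_integrableOn_exp_neg_mul (hβ : 0 < β) (hf : ∀ t, 1 ≤ t → f t = 0)
    (s : ℂ) : MellinConvergent f s ↔
      IntegrableOn (fun x : ℝ => cexp (-(β * s * x)) • f (rexp (-(β * x)))) (Ioi 0) := by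
  rw [mellinConvergent_iff_integrableOn_Ioo_of_eq_zero hf,
    integrableOn_Ioo_zero_one_iff_exp_neg_mul hβ]
  simp only [smul_ofReal_exp_neg_mul_cpow]
  exact integrable_fun_smul_iff hβ.ne' _

end MellinOfVanishingOnIci

lemma ne_neg_natCast_of_re_pos {z : ℂ} (hz : 0 < z.re) (m : ℕ) : z ≠ -m := by
  rintro rfl
  rw [neg_re, natCast_re, neg_pos] at hz
  exact (Nat.cast_nonneg m).not_gt hz

lemma hasDerivAt_cBeta_left {s v : ℂ} (hs : ∀ m : ℕ, s ≠ -m) (hsv : ∀ m : ℕ, s + v ≠ -m) :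
    HasDerivAt (fun z => cBeta z v)
      (cBeta s v * (_root_.digamma s - _root_.digamma (s + v))) s := by
  have hGamma : HasDerivAt Complex.Gamma (deriv Complex.Gamma s) s :=
    (Complex.differentiableAt_Gamma s hs).hasDerivAt
  have hGamma_add : HasDerivAt (fun z => Complex.Gamma (z + v)) (deriv Complex.Gamma (s + v)) s :=
    (Complex.differentiableAt_Gamma _ hsv).hasDerivAt.comp_add_const s v
  refine ((hGamma.mul_const (Complex.Gamma v)).div hGamma_add
    (Complex.Gamma_ne_zero hsv)).congr_deriv ?_
  simp only [cBeta, _root_.digamma]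
  field_simp [Complex.Gamma_ne_zero hs, Complex.Gamma_ne_zero hsv]

section BetaWeight

noncomputable def betaWeight (lam : ℝ) : ℝ → ℂ :=
  (Iio 1).indicator fun t => ((((1 - t) ^ lam : ℝ)) : ℂ)⁻¹

variable {β lam : ℝ} {s : ℂ}

lemma betaWeight_eq_zero {t : ℝ} (ht : 1 ≤ t) : betaWeight lam t = 0 :=
  indicator_of_notMem (show t ∉ Iio 1 from not_lt.2 ht) _

lemma log_smul_betaWeight_eq_zero {t : ℝ} (ht : 1 ≤ t) : Real.log t • betaWeight lam t = 0 := by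
  rw [betaWeight_eq_zero ht, smul_zero]

lemma betaWeight_isBigO_atTop (a : ℝ) : betaWeight lam =O[atTop] (· ^ (-a)) :=
  (isBigO_zero _ _).congr' ((eventually_ge_atTop 1).mono fun _ ht => (betaWeight_eq_zero ht).symm)
    EventuallyEq.rfl

lemma betaWeight_of_lt_one {t : ℝ} (ht : t < 1) :
    betaWeight lam t = ((((1 - t) ^ lam : ℝ)) : ℂ)⁻¹ :=
  indicator_of_mem (show t ∈ Iio 1 from ht) _

lemma betaWeight_isBigO_nhdsGT_zero : betaWeight lam =O[𝓝[>] 0] (· ^ (-(0 : ℝ))) := by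
  have hcont : ContinuousAt (fun t : ℝ => ((((1 - t) ^ lam : ℝ)) : ℂ)⁻¹) 0 := by
    fun_prop (disch := norm_num)
  have hlim : Tendsto (betaWeight lam) (𝓝 0) (𝓝 (betaWeight lam 0)) :=
    hcont.congr_of_eventuallyEq ((eventually_lt_nhds one_pos).mono fun _ => betaWeight_of_lt_one)
  exact ((hlim.mono_left nhdsWithin_le_nhds).isBigO_one ℝ).congr_right fun t => by simp

lemma integrableOn_betaWeight (hlam : lam < 1) : IntegrableOn (betaWeight lam) (Ioi 0) := by
  have hrpow : IntervalIntegrable (fun t : ℝ => (1 - t) ^ (-lam)) volume 0 1 := by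
    simpa using ((intervalIntegral.intervalIntegrable_rpow' (a := 0) (b := 1)
      (neg_lt_neg hlam)).comp_sub_left 1).symm
  refine IntegrableOn.of_forall_sdiff_eq_zero (s := Ioo 0 1) ?_ measurableSet_Ioi
    fun t ht => betaWeight_eq_zero (not_lt.1 fun h => ht.2 ⟨ht.1, h⟩)
  have hcast : IntegrableOn (fun t : ℝ => (((1 - t) ^ (-lam) : ℝ) : ℂ)) (Ioo 0 1) :=
    (hrpow.1.mono_set Ioo_subset_Ioc_self).ofReal
  refine hcast.congr_fun (fun t ht => ?_) measurableSet_Ioo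
  beta_reduce
  rw [betaWeight_of_lt_one ht.2, Real.rpow_neg (sub_pos.2 ht.2).le, ofReal_inv]

lemma mellin_betaWeight (hs : 0 < s.re) (hlam : lam < 1) :
    mellin (betaWeight lam) s = cBeta s (1 - lam) := by
  have hv : 0 < (1 - (lam : ℂ)).re := by simpa using hlam
  rw [cBeta, Gamma_mul_Gamma_eq_betaIntegral hs hv,
    mul_div_cancel_left₀ _ (Gamma_ne_zero_of_re_pos (by simpa using add_pos hs hv)),
    betaIntegral, intervalIntegral.integral_of_le zero_le_one, integral_Ioc_eq_integral_Ioo,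
    mellin_eq_integral_Ioo_of_eq_zero (fun _ => betaWeight_eq_zero)]
  refine setIntegral_congr_fun measurableSet_Ioo fun t ht => ?_
  have hsub : (1 : ℂ) - t = ((1 - t : ℝ) : ℂ) := by push_cast; rfl
  have hexp : (1 : ℂ) - lam - 1 = ((-lam : ℝ) : ℂ) := by push_cast; ring
  rw [betaWeight_of_lt_one ht.2, smul_eq_mul, hsub, hexp, ← ofReal_cpow (sub_pos.2 ht.2).le,
    Real.rpow_neg (sub_pos.2 ht.2).le, ofReal_inv]

lemma mellinConvergent_betaWeight (hs : 0 < s.re) (hlam : lam < 1) :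
    MellinConvergent (betaWeight lam) s :=
  mellinConvergent_of_isBigO_rpow (integrableOn_betaWeight hlam).locallyIntegrableOn
    (betaWeight_isBigO_atTop _) (lt_add_one s.re) betaWeight_isBigO_nhdsGT_zero hs

/-- Differentiating `mellin (betaWeight λ) = B(·, 1 - λ)` under the integral sign. -/
lemma mellin_log_smul_betaWeight (hs : 0 < s.re) (hlam : lam < 1) :
    MellinConvergent (fun t => Real.log t • betaWeight lam t) s ∧
      mellin (fun t => Real.log t • betaWeight lam t) s
        = cBeta s (1 - lam) * (_root_.digamma s - _root_.digamma (s + (1 - lam))) := by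
  have hv : 0 < (1 - (lam : ℂ)).re := by simpa using hlam
  obtain ⟨hconv, hderiv⟩ := mellin_hasDerivAt_of_isBigO_rpow
    (integrableOn_betaWeight hlam).locallyIntegrableOn (betaWeight_isBigO_atTop _)
    (lt_add_one s.re) betaWeight_isBigO_nhdsGT_zero hs
  refine ⟨hconv, hderiv.unique ((hasDerivAt_cBeta_left (ne_neg_natCast_of_re_pos hs)
    (ne_neg_natCast_of_re_pos (by simpa using add_pos hs hv))).congr_of_eventuallyEq ?_)⟩
  filter_upwards [(continuous_re.isOpen_preimage _ isOpen_Ioi).mem_nhds hs] with z hz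
  exact mellin_betaWeight hz hlam

lemma integral_exp_neg_mul_betaWeight (hβ : 0 < β) (hs : 0 < s.re) (hlam : lam < 1) :
    IntegrableOn (fun x : ℝ => cexp (-(β * s * x)) • betaWeight lam (rexp (-(β * x)))) (Ioi 0) ∧
      ∫ x in Ioi (0 : ℝ), cexp (-(β * s * x)) • betaWeight lam (rexp (-(β * x)))
        = β⁻¹ • cBeta s (1 - lam) :=
  ⟨(mellinConvergent_iff_integrableOn_exp_neg_mul hβ (fun _ => betaWeight_eq_zero) s).1
      (mellinConvergent_betaWeight hs hlam),
    by rw [integral_exp_neg_mul_eq_mellin hβ (fun _ => betaWeight_eq_zero),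
      mellin_betaWeight hs hlam]⟩

lemma integral_exp_neg_mul_log_smul_betaWeight (hβ : 0 < β) (hs : 0 < s.re) (hlam : lam < 1) :
    IntegrableOn (fun x : ℝ => cexp (-(β * s * x)) •
        (Real.log (rexp (-(β * x))) • betaWeight lam (rexp (-(β * x))))) (Ioi 0) ∧
      ∫ x in Ioi (0 : ℝ), cexp (-(β * s * x)) •
          (Real.log (rexp (-(β * x))) • betaWeight lam (rexp (-(β * x))))
        = β⁻¹ • (cBeta s (1 - lam) * (_root_.digamma s - _root_.digamma (s + (1 - lam)))) := by
  obtain ⟨hconv, hmellin⟩ := mellin_log_smul_betaWeight hs hlam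
  exact ⟨(mellinConvergent_iff_integrableOn_exp_neg_mul hβ
      (fun _ => log_smul_betaWeight_eq_zero) s).1 hconv,
    by rw [integral_exp_neg_mul_eq_mellin hβ (fun _ => log_smul_betaWeight_eq_zero), hmellin]⟩

end BetaWeight

/-- With `u = e^{-βx}`, `e^{ixy} e^{-αβx} = u^{α - iy/β}` and `ixy = -(iy/β) log u`. -/
lemma integrand_eq_betaWeight_terms {α β lam : ℝ} (hβ : 0 < β) (y : ℝ) {x : ℝ} (hx : 0 < x) :
    (cexp (I * x * y) - 1 - I * x * y) * cexp (-(α * β * x) : ℂ)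
        / (((1 - rexp (-(β * x))) ^ lam : ℝ) : ℂ)
      = cexp (-(β * (α - I * y / β) * x)) • betaWeight lam (rexp (-(β * x)))
        - cexp (-(β * α * x)) • betaWeight lam (rexp (-(β * x)))
        + I * y / β * (cexp (-(β * α * x)) •
            (Real.log (rexp (-(β * x))) • betaWeight lam (rexp (-(β * x))))) := by
  have hβ' : (β : ℂ) ≠ 0 := ofReal_ne_zero.2 hβ.ne'
  have hu : rexp (-(β * x)) < 1 := Real.exp_lt_one_iff.2 (neg_neg_of_pos (mul_pos hβ hx))
  have hexp : cexp (-(β * (α - I * y / β) * x)) = cexp (I * x * y) * cexp (-(α * β * x)) := by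
    rw [← Complex.exp_add]
    field_simp
    ring_nf
  rw [betaWeight_of_lt_one hu, Real.log_exp, hexp, real_smul]
  simp only [smul_eq_mul]
  field_simp
  push_cast
  ring

theorem stmt11_general (α β lam : ℝ) (hα : 0 < α) (hβ : 0 < β)
    (hlam : lam ∈ Set.Ioo (0 : ℝ) 1) (y : ℝ) :
    ∫ x in Set.Ioi (0 : ℝ),
      (Complex.exp (Complex.I * x * y) - 1 - Complex.I * x * y)
        * Complex.exp (-(α * β * x) : ℂ)
        / (((1 - Real.exp (-(β * x))) ^ lam : ℝ) : ℂ)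
    = (1 / (β : ℂ)) * (cBeta ((α : ℂ) - Complex.I * y / β) (1 - lam)
          - cBeta (α : ℂ) (1 - lam))
      - Complex.I * y / (β : ℂ) ^ 2 * cBeta (α : ℂ) (1 - lam)
          * (_root_.digamma (1 + (α : ℂ) - lam) - _root_.digamma (α : ℂ)) := by
  have hs : 0 < ((α : ℂ) - I * y / β).re := by simpa using hα
  have hα' : 0 < (α : ℂ).re := by simpa using hα
  obtain ⟨hint_s, hI_s⟩ := integral_exp_neg_mul_betaWeight hβ hs hlam.2
  obtain ⟨hint_α, hI_α⟩ := integral_exp_neg_mul_betaWeight hβ hα' hlam.2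
  obtain ⟨hint_log, hI_log⟩ := integral_exp_neg_mul_log_smul_betaWeight hβ hα' hlam.2
  rw [setIntegral_congr_fun measurableSet_Ioi fun x hx => integrand_eq_betaWeight_terms hβ y hx,
    integral_add (hint_s.fun_sub hint_α) (hint_log.const_mul _), integral_sub hint_s hint_α,
    integral_const_mul, hI_s, hI_α, hI_log, show (α : ℂ) + (1 - lam) = 1 + α - lam by ring]
  have hβ' : (β : ℂ) ≠ 0 := ofReal_ne_zero.2 hβ.ne'
  simp only [real_smul, ofReal_inv]
  field_simp
  ring

/-- For `α, β > 0`, `c ≥ 0`, `λ ∈ (0,1)` and real `y`,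
`∫₀^∞ (e^{ixy}-1-ixy) e^{-αβx}/(1-e^{-βx})^λ dx
 = (1/β)[B(α-iy/β,1-λ) - B(α,1-λ)] - (iy/β²) B(α,1-λ)(ψ(1+α-λ)-ψ(α))`. -/
theorem stmt11 (α β c lam : ℝ) (hα : 0 < α) (hβ : 0 < β) (hc : 0 ≤ c)
    (hlam : lam ∈ Set.Ioo (0 : ℝ) 1) (y : ℝ) :
    ∫ x in Set.Ioi (0 : ℝ),
      (Complex.exp (Complex.I * x * y) - 1 - Complex.I * x * y)
        * Complex.exp (-(α * β * x) : ℂ)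
        / (((1 - Real.exp (-(β * x))) ^ lam : ℝ) : ℂ)
    = (1 / (β : ℂ)) * (cBeta ((α : ℂ) - Complex.I * y / β) (1 - lam)
          - cBeta (α : ℂ) (1 - lam))
      - Complex.I * y / (β : ℂ) ^ 2 * cBeta (α : ℂ) (1 - lam)
          * (_root_.digamma (1 + (α : ℂ) - lam) - _root_.digamma (α : ℂ)) :=
  stmt11_general α β lam hα hβ hlam y
end

section
/- As real ζ → +∞ avoiding the points where sin(π(ζ−α)) = 0, B(α − ζ, γ) = Γ(γ)·(sin(π(ζ−α−γ))/sin(π(ζ−α)))·ζ^{−γ}·[1 + γ(2α+γ−1)/(2ζ) + O(ζ^{−2})], uniformly as long as |sin(π(ζ−α))| is bounded away from 0. -/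
/-!
By the reflection formula, `B(α - ζ, γ) = Γ(γ) · sin(π(ζ-α-γ))/sin(π(ζ-α)) · Γ(ζ+a)/Γ(ζ+a+γ)`
with `a = 1 - α - γ`, and the sine quotient stays bounded where the denominator is bounded away
from `0`. Everything therefore reduces to the expansion
`Γ(x+a)/Γ(x+a+c) = x^{-c} (1 - c(2a+c-1)/(2x) + O(x^{-2}))`.
For `Re c > 0` this is Watson's lemma: substituting `t = e^{-s}` in the Beta integral gives
`Γ(c) Γ(x+a)/Γ(x+a+c) = ∫₀^∞ e^{-xs} s^{c-1} φ(s) ds` with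
`φ(s) = e^{-as} ((1 - e^{-s})/s)^{c-1} = 1 - (a + (c-1)/2) s + O(s² e^{Ks})`.
The remaining `c` are reached through `Γ(z+1) = z Γ(z)`, which links the expansions for `c` and
`c + 1`.
-/

open Real Complex Filter Asymptotics

open MeasureTheory Set

lemma integrableOn_rpow_mul_exp_neg_mul_Ioi {a r : ℝ} (ha : 0 < a) (hr : 0 < r) :
    IntegrableOn (fun t : ℝ => t ^ (a - 1) * rexp (-(r * t))) (Ioi 0) := by
  simpa [neg_mul] using integrableOn_rpow_mul_exp_neg_mul_rpow (p := 1) (by linarith) one_pos hr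

lemma integrableOn_cpow_mul_exp_neg_mul_Ioi {a : ℂ} (ha : 0 < a.re) {r : ℝ} (hr : 0 < r) :
    IntegrableOn (fun t : ℝ => (t:ℂ) ^ (a - 1) * cexp (-(r * t))) (Ioi 0) := by
  refine (integrableOn_rpow_mul_exp_neg_mul_Ioi ha hr).mono' (by fun_prop) ?_
  filter_upwards [ae_restrict_mem measurableSet_Ioi] with t (ht : 0 < t)
  rw [norm_mul, norm_cpow_eq_rpow_re_of_pos ht, Complex.norm_exp]
  simp

lemma integral_cpow_mul_exp_neg_mul_Ioi_eq_Gamma_mul {a : ℂ} (ha : 0 < a.re) {r : ℝ}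
    (hr : 0 < r) :
    ∫ t in Ioi (0:ℝ), (t:ℂ) ^ (a - 1) * cexp (-(r * t)) = Complex.Gamma a * (r:ℂ) ^ (-a) := by
  rw [integral_cpow_mul_exp_neg_mul_Ioi ha hr, mul_comm, one_div, cpow_neg,
    inv_cpow _ _ (by rw [arg_ofReal_of_nonneg hr.le]; exact pi_ne_zero.symm)]

lemma cpow_neg_add_one {x : ℂ} (hx : x ≠ 0) (y : ℂ) : x ^ (-(y + 1)) = x ^ (-y) * x⁻¹ := by
  rw [neg_add, cpow_add _ _ hx, cpow_neg_one]

lemma cpow_sub_one_mul {x : ℂ} (hx : x ≠ 0) (y : ℂ) : x ^ (y - 1) * x = x ^ y := by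
  conv_rhs => rw [← sub_add_cancel y 1, cpow_add _ _ hx, cpow_one]

section Watson

variable {c q : ℂ} {φ : ℝ → ℂ} {C K : ℝ}

lemma integrableOn_cpow_mul_exp_mul_one_add (hc : 0 < c.re) {x : ℝ} (hx₀ : 0 < x) :
    IntegrableOn (fun s : ℝ => (s:ℂ) ^ (c - 1) * cexp (-(x * s)) * (1 + q * s)) (Ioi 0) := by
  have hc₁ : 0 < (c + 1).re := by simp; linarith
  refine ((integrableOn_cpow_mul_exp_neg_mul_Ioi hc hx₀).add
    ((integrableOn_cpow_mul_exp_neg_mul_Ioi hc₁ hx₀).const_mul q)).congr_fun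
    (fun s (hs : 0 < s) => ?_) measurableSet_Ioi
  simp only [Pi.add_apply, add_sub_cancel_right, ← cpow_sub_one_mul (ofReal_ne_zero.mpr hs.ne') c]
  ring

lemma integral_cpow_mul_exp_mul_one_add (hc : 0 < c.re) {x : ℝ} (hx₀ : 0 < x) :
    ∫ s in Ioi (0:ℝ), (s:ℂ) ^ (c - 1) * cexp (-(x * s)) * (1 + q * s)
      = Complex.Gamma c * (x:ℂ) ^ (-c) + q * (Complex.Gamma (c + 1) * (x:ℂ) ^ (-(c + 1))) := by
  have hc₁ : 0 < (c + 1).re := by simp; linarith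
  rw [← integral_cpow_mul_exp_neg_mul_Ioi_eq_Gamma_mul hc hx₀,
    ← integral_cpow_mul_exp_neg_mul_Ioi_eq_Gamma_mul hc₁ hx₀, ← integral_const_mul,
    ← integral_add (integrableOn_cpow_mul_exp_neg_mul_Ioi hc hx₀)
      ((integrableOn_cpow_mul_exp_neg_mul_Ioi hc₁ hx₀).const_mul q)]
  refine setIntegral_congr_fun measurableSet_Ioi fun s (hs : 0 < s) => ?_
  rw [add_sub_cancel_right, ← cpow_sub_one_mul (ofReal_ne_zero.mpr hs.ne') c]
  ring

lemma norm_cpow_mul_exp_mul_sub_le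
    (hφ : ∀ s > 0, ‖φ s - (1 + q * s)‖ ≤ C * (s ^ 2 * rexp (K * s))) {x s : ℝ} (hs : 0 < s) :
    ‖(s:ℂ) ^ (c - 1) * cexp (-(x * s)) * (φ s - (1 + q * s))‖
      ≤ C * (s ^ (c.re + 2 - 1) * rexp (-((x - K) * s))) :=
  calc _ = s ^ (c.re - 1) * rexp (-(x * s)) * ‖φ s - (1 + q * s)‖ := by
        rw [norm_mul, norm_mul, norm_cpow_eq_rpow_re_of_pos hs, Complex.norm_exp]
        simp
    _ ≤ s ^ (c.re - 1) * rexp (-(x * s)) * (C * (s ^ 2 * rexp (K * s))) := by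
        gcongr; exact hφ s hs
    _ = C * (s ^ (c.re + 2 - 1) * rexp (-((x - K) * s))) := by
        rw [show c.re + 2 - 1 = (c.re - 1) + 2 by ring, rpow_add hs, rpow_two,
          show -((x - K) * s) = -(x * s) + K * s by ring, Real.exp_add]
        ring

theorem norm_integral_cpow_mul_exp_mul_sub_le (hc : 0 < c.re)
    (hφm : AEStronglyMeasurable φ (volume.restrict (Ioi 0)))
    (hφ : ∀ s > 0, ‖φ s - (1 + q * s)‖ ≤ C * (s ^ 2 * rexp (K * s))) {x : ℝ} (hx₀ : 0 < x)
    (hxK : K < x) :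
    ‖(∫ s in Ioi (0:ℝ), (s:ℂ) ^ (c - 1) * cexp (-(x * s)) * φ s)
        - (Complex.Gamma c * (x:ℂ) ^ (-c) + q * (Complex.Gamma (c + 1) * (x:ℂ) ^ (-(c + 1))))‖
      ≤ C * (Real.Gamma (c.re + 2) * (x - K) ^ (-(c.re + 2))) := by
  have hdom : IntegrableOn (fun s : ℝ => C * (s ^ (c.re + 2 - 1) * rexp (-((x - K) * s))))
      (Ioi 0) :=
    (integrableOn_rpow_mul_exp_neg_mul_Ioi (by linarith) (by linarith)).const_mul C
  have herr_le : ∀ᵐ s : ℝ ∂(volume.restrict (Ioi 0)),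
      ‖(s:ℂ) ^ (c - 1) * cexp (-(x * s)) * (φ s - (1 + q * s))‖
        ≤ C * (s ^ (c.re + 2 - 1) * rexp (-((x - K) * s))) := by
    filter_upwards [ae_restrict_mem measurableSet_Ioi] with s hs
    exact norm_cpow_mul_exp_mul_sub_le hφ hs
  have herr_int : IntegrableOn
      (fun s : ℝ => (s:ℂ) ^ (c - 1) * cexp (-(x * s)) * (φ s - (1 + q * s))) (Ioi 0) :=
    hdom.mono' ((Measurable.aestronglyMeasurable (by fun_prop)).mul (hφm.sub (by fun_prop)))
      herr_le
  have hsplit : ∫ s in Ioi (0:ℝ), (s:ℂ) ^ (c - 1) * cexp (-(x * s)) * φ s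
      = (∫ s in Ioi (0:ℝ), (s:ℂ) ^ (c - 1) * cexp (-(x * s)) * (1 + q * s))
        + ∫ s in Ioi (0:ℝ), (s:ℂ) ^ (c - 1) * cexp (-(x * s)) * (φ s - (1 + q * s)) := by
    rw [← integral_add (integrableOn_cpow_mul_exp_mul_one_add hc hx₀) herr_int]
    congr 1; ext s; ring
  rw [hsplit, integral_cpow_mul_exp_mul_one_add hc hx₀, add_sub_cancel_left]
  calc _ ≤ ∫ s in Ioi (0:ℝ), C * (s ^ (c.re + 2 - 1) * rexp (-((x - K) * s))) :=
        norm_integral_le_of_norm_le hdom herr_le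
    _ = C * (Real.Gamma (c.re + 2) * (x - K) ^ (-(c.re + 2))) := by
        rw [integral_const_mul, integral_rpow_mul_exp_neg_mul_Ioi (by linarith) (by linarith),
          one_div, inv_rpow (by linarith), ← rpow_neg (by linarith), mul_comm (_ ^ _)]

theorem integral_cpow_mul_exp_mul_sub_isBigO (hc : 0 < c.re)
    (hφm : AEStronglyMeasurable φ (volume.restrict (Ioi 0)))
    (hφ : ∀ s > 0, ‖φ s - (1 + q * s)‖ ≤ C * (s ^ 2 * rexp (K * s))) :
    (fun x : ℝ => (∫ s in Ioi (0:ℝ), (s:ℂ) ^ (c - 1) * cexp (-(x * s)) * φ s)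
        - (Complex.Gamma c * (x:ℂ) ^ (-c) + q * (Complex.Gamma (c + 1) * (x:ℂ) ^ (-(c + 1)))))
      =O[atTop] fun x : ℝ => x ^ (-c.re - 2) := by
  refine IsBigO.of_bound (|C| * Real.Gamma (c.re + 2) * 2 ^ (c.re + 2)) ?_
  filter_upwards [eventually_ge_atTop (max (2 * K) 1)] with x hx
  have hx₀ : 0 < x := by linarith [le_max_right (2 * K) 1]
  have hxK : x / 2 ≤ x - K := by linarith [le_max_left (2 * K) 1]
  have hΓ : 0 < Real.Gamma (c.re + 2) := Real.Gamma_pos_of_pos (by linarith)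
  calc _ ≤ C * (Real.Gamma (c.re + 2) * (x - K) ^ (-(c.re + 2))) :=
        norm_integral_cpow_mul_exp_mul_sub_le hc hφm hφ hx₀ (by linarith)
    _ ≤ |C| * (Real.Gamma (c.re + 2) * (x / 2) ^ (-(c.re + 2))) := by
        have hxK₀ : 0 < x - K := by linarith
        refine mul_le_mul (le_abs_self C) ?_ (by positivity) (abs_nonneg C)
        exact mul_le_mul_of_nonneg_left
          (rpow_le_rpow_of_nonpos (by positivity) hxK (by linarith)) hΓ.le
    _ = |C| * Real.Gamma (c.re + 2) * 2 ^ (c.re + 2) * ‖x ^ (-c.re - 2)‖ := by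
        rw [norm_of_nonneg (by positivity), div_rpow hx₀.le zero_le_two, rpow_neg zero_le_two,
          div_inv_eq_mul, neg_add']
        ring

end Watson

section ExpNegAverage

noncomputable def expNegAverage (s : ℝ) : ℝ := (1 - rexp (-s)) / s

variable {s : ℝ}

lemma exp_neg_le_expNegAverage (hs : 0 < s) : rexp (-s) ≤ expNegAverage s := by
  rw [expNegAverage, le_div_iff₀ hs]
  have h := Real.add_one_le_exp s
  have h2 : rexp (-s) * rexp s = 1 := by rw [← Real.exp_add]; simp
  nlinarith [Real.exp_pos (-s), Real.exp_pos s]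

lemma expNegAverage_pos (hs : 0 < s) : 0 < expNegAverage s :=
  (Real.exp_pos _).trans_le (exp_neg_le_expNegAverage hs)

lemma expNegAverage_le_one (hs : 0 < s) : expNegAverage s ≤ 1 := by
  rw [expNegAverage, div_le_one hs]
  linarith [Real.add_one_le_exp (-s)]

lemma abs_expNegAverage_sub_le (hs : 0 < s) (hs₁ : s ≤ 1) :
    |expNegAverage s - (1 - s / 2)| ≤ s ^ 2 := by
  have hb := Real.exp_bound (x := -s) (by rwa [abs_neg, abs_of_pos hs]) (n := 3) (by norm_num)
  simp only [abs_neg, abs_of_pos hs, Finset.sum_range_succ, Finset.sum_range_zero] at hb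
  norm_num [Nat.factorial] at hb
  have heq : expNegAverage s - (1 - s / 2) = -(rexp (-s) - (1 + -s + s ^ 2 / 2)) / s := by
    rw [expNegAverage]; field_simp; ring
  rw [heq, abs_div, abs_neg, abs_of_pos hs, div_le_iff₀ hs]
  nlinarith [pow_pos hs 3]

lemma abs_log_expNegAverage_add_le (hs : 0 < s) (hs₁ : s ≤ 1) :
    |Real.log (expNegAverage s) + s / 2| ≤ 4 * s ^ 2 := by
  obtain ⟨y, hy⟩ : ∃ y, expNegAverage s = 1 - y := ⟨1 - expNegAverage s, by ring⟩
  have hy₀ : 0 ≤ y := by linarith [expNegAverage_le_one hs]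
  have hys : y ≤ s := by linarith [exp_neg_le_expNegAverage hs, Real.add_one_le_exp (-s)]
  have hy₁ : y ≤ 2 / 3 := by
    have : rexp (-1) ≤ rexp (-s) := Real.exp_le_exp.mpr (by linarith)
    linarith [exp_neg_le_expNegAverage hs, Real.exp_neg_one_gt_d9]
  have hlog := Real.abs_log_sub_add_sum_range_le (x := y) (by rw [abs_of_nonneg hy₀]; linarith) 1
  norm_num [abs_of_nonneg hy₀] at hlog
  have hlog' : |y + Real.log (1 - y)| ≤ 3 * y ^ 2 :=
    hlog.trans (by rw [div_le_iff₀ (by linarith)]; nlinarith)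
  have htaylor : |s / 2 - y| ≤ s ^ 2 := by
    have := abs_expNegAverage_sub_le hs hs₁
    rwa [hy, show 1 - y - (1 - s / 2) = s / 2 - y by ring] at this
  rw [hy]
  calc |Real.log (1 - y) + s / 2|
      = |(y + Real.log (1 - y)) + (s / 2 - y)| := by ring_nf
    _ ≤ 3 * y ^ 2 + s ^ 2 := (abs_add_le _ _).trans (add_le_add hlog' htaylor)
    _ ≤ 4 * s ^ 2 := by nlinarith

end ExpNegAverage

lemma exists_le_mul_sq_mul_exp {f : ℝ → ℝ} {s₀ A B K : ℝ} (hs₀ : 0 < s₀) (hA : 0 ≤ A)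
    (hK : 0 ≤ K) (hsmall : ∀ s, 0 < s → s ≤ s₀ → f s ≤ A * s ^ 2)
    (hlarge : ∀ s, 0 < s → f s ≤ B * rexp (K * s)) :
    ∃ C, ∀ s, 0 < s → f s ≤ C * (s ^ 2 * rexp (K * s)) := by
  refine ⟨max A (|B| / s₀ ^ 2), fun s hs => ?_⟩
  have hexp : 1 ≤ rexp (K * s) := Real.one_le_exp (by positivity)
  rcases le_or_gt s s₀ with hss | hss
  · calc f s ≤ A * s ^ 2 := hsmall s hs hss
      _ ≤ max A (|B| / s₀ ^ 2) * (s ^ 2 * rexp (K * s)) := by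
        gcongr
        · exact le_max_left _ _
        · exact le_mul_of_one_le_right (by positivity) hexp
  · calc f s ≤ |B| * rexp (K * s) := (hlarge s hs).trans (by gcongr; exact le_abs_self B)
      _ ≤ |B| / s₀ ^ 2 * (s ^ 2 * rexp (K * s)) := by
        rw [div_mul_eq_mul_div, le_div_iff₀ (by positivity)]
        have : s₀ ^ 2 ≤ s ^ 2 := by gcongr
        have := mul_le_mul_of_nonneg_left this (mul_nonneg (abs_nonneg B) (Real.exp_pos (K * s)).le)
        linarith
      _ ≤ max A (|B| / s₀ ^ 2) * (s ^ 2 * rexp (K * s)) := by gcongr; exact le_max_right _ _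

section NormalizedBetaKernel

/-- The substitution `t = e^{-s}` turns the Beta integrand `t^{x+a-1} (1-t)^{c-1} dt` into
`e^{-xs} s^{c-1} normalizedBetaKernel a c s ds`. -/
noncomputable def normalizedBetaKernel (a c : ℂ) (s : ℝ) : ℂ :=
  cexp (-a * s) * (expNegAverage s : ℂ) ^ (c - 1)

variable {a c : ℂ} {s : ℝ}

lemma measurable_normalizedBetaKernel : Measurable (normalizedBetaKernel a c) := by
  unfold normalizedBetaKernel expNegAverage
  fun_prop

lemma normalizedBetaKernel_eq_exp (hs : 0 < s) :
    normalizedBetaKernel a c s = cexp (-a * s + (c - 1) * Real.log (expNegAverage s)) := by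
  rw [normalizedBetaKernel, Complex.exp_add, cpow_def_of_ne_zero (by
    exact_mod_cast (expNegAverage_pos hs).ne'), ofReal_log (expNegAverage_pos hs).le]
  ring_nf

lemma norm_normalizedBetaKernel_le (hs : 0 < s) :
    ‖normalizedBetaKernel a c s‖ ≤ rexp ((|a.re| + |c.re - 1|) * s) := by
  have hpos := expNegAverage_pos hs
  rw [normalizedBetaKernel, norm_mul, Complex.norm_exp, norm_cpow_eq_rpow_re_of_pos hpos]
  have hpow : expNegAverage s ^ (c.re - 1) ≤ rexp (|c.re - 1| * s) := by
    rcases le_or_gt 0 (c.re - 1) with h | h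
    · calc expNegAverage s ^ (c.re - 1) ≤ 1 := rpow_le_one hpos.le (expNegAverage_le_one hs) h
        _ ≤ rexp (|c.re - 1| * s) := Real.one_le_exp (by positivity)
    · calc expNegAverage s ^ (c.re - 1) ≤ rexp (-s) ^ (c.re - 1) :=
            rpow_le_rpow_of_nonpos (Real.exp_pos _) (exp_neg_le_expNegAverage hs) h.le
        _ = rexp (|c.re - 1| * s) := by rw [← Real.exp_mul, abs_of_neg h]; ring_nf
  calc rexp (-a * s).re * expNegAverage s ^ (c - 1).re
      ≤ rexp (|a.re| * s) * rexp (|c.re - 1| * s) := by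
        gcongr
        · simp only [neg_mul, neg_re, mul_re, ofReal_re, ofReal_im, mul_zero, sub_zero]
          nlinarith [neg_abs_le a.re]
        · simpa using hpow
    _ = rexp ((|a.re| + |c.re - 1|) * s) := by rw [← Real.exp_add]; ring_nf

lemma norm_normalizedBetaKernel_sub_le_sq (hs : 0 < s) (hs₁ : s ≤ 1)
    (hsM : (‖a‖ + 5 * ‖c - 1‖) * s ≤ 1) :
    ‖normalizedBetaKernel a c s - (1 + (-a - (c - 1) / 2) * s)‖
      ≤ ((‖a‖ + 5 * ‖c - 1‖) ^ 2 + 4 * ‖c - 1‖) * s ^ 2 := by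
  set L := Real.log (expNegAverage s)
  have hL : |L + s / 2| ≤ 4 * s ^ 2 := abs_log_expNegAverage_add_le hs hs₁
  have hL' : |L| ≤ 5 * s := by
    have := abs_sub (L + s / 2) (s / 2)
    rw [add_sub_cancel_right, abs_of_pos (by positivity : 0 < s / 2)] at this
    nlinarith
  set g : ℂ := -a * s + (c - 1) * L
  have hg_lin : ‖g - (-a - (c - 1) / 2) * s‖ ≤ 4 * ‖c - 1‖ * s ^ 2 := by
    have : g - (-a - (c - 1) / 2) * s = (c - 1) * ((L + s / 2 : ℝ) : ℂ) := by
      simp only [g]; push_cast; ring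
    rw [this, norm_mul, norm_real, Real.norm_eq_abs]
    nlinarith [norm_nonneg (c - 1)]
  have hg : ‖g‖ ≤ (‖a‖ + 5 * ‖c - 1‖) * s := by
    calc ‖g‖ ≤ ‖a‖ * s + ‖c - 1‖ * |L| := by
          refine (norm_add_le _ _).trans_eq ?_
          rw [norm_mul, norm_mul, norm_neg, norm_real, norm_real, Real.norm_eq_abs,
            Real.norm_eq_abs, abs_of_pos hs]
      _ ≤ (‖a‖ + 5 * ‖c - 1‖) * s := by nlinarith [norm_nonneg (c - 1)]
  have hexp : ‖cexp g - 1 - g‖ ≤ ‖g‖ ^ 2 := norm_exp_sub_one_sub_id_le (hg.trans hsM)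
  rw [normalizedBetaKernel_eq_exp hs]
  calc ‖cexp g - (1 + (-a - (c - 1) / 2) * s)‖
      = ‖(cexp g - 1 - g) + (g - (-a - (c - 1) / 2) * s)‖ := by ring_nf
    _ ≤ ‖g‖ ^ 2 + 4 * ‖c - 1‖ * s ^ 2 := (norm_add_le _ _).trans (add_le_add hexp hg_lin)
    _ ≤ ((‖a‖ + 5 * ‖c - 1‖) * s) ^ 2 + 4 * ‖c - 1‖ * s ^ 2 := by gcongr
    _ = ((‖a‖ + 5 * ‖c - 1‖) ^ 2 + 4 * ‖c - 1‖) * s ^ 2 := by ring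

lemma norm_normalizedBetaKernel_sub_le_exp (hs : 0 < s) :
    ‖normalizedBetaKernel a c s - (1 + (-a - (c - 1) / 2) * s)‖
      ≤ (2 + ‖-a - (c - 1) / 2‖) * rexp ((|a.re| + |c.re - 1| + 1) * s) := by
  set K := |a.re| + |c.re - 1|
  have hK : 0 ≤ K := by positivity
  have h₁ : rexp (K * s) ≤ rexp ((K + 1) * s) := Real.exp_le_exp.mpr (by nlinarith)
  have h₂ : 1 ≤ rexp ((K + 1) * s) := Real.one_le_exp (by positivity)
  have h₃ : s ≤ rexp ((K + 1) * s) :=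
    (Real.add_one_le_exp s).trans' (by linarith) |>.trans (Real.exp_le_exp.mpr (by nlinarith))
  calc ‖normalizedBetaKernel a c s - (1 + (-a - (c - 1) / 2) * s)‖
      ≤ ‖normalizedBetaKernel a c s‖ + (1 + ‖-a - (c - 1) / 2‖ * s) := by
        refine (norm_sub_le _ _).trans (add_le_add le_rfl ((norm_add_le _ _).trans_eq ?_))
        rw [norm_one, norm_mul, norm_real, Real.norm_eq_abs, abs_of_pos hs]
    _ ≤ rexp ((K + 1) * s) + (rexp ((K + 1) * s) + ‖-a - (c - 1) / 2‖ * rexp ((K + 1) * s)) := by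
        gcongr
        exact (norm_normalizedBetaKernel_le hs).trans h₁
    _ = (2 + ‖-a - (c - 1) / 2‖) * rexp ((K + 1) * s) := by ring

lemma exists_norm_normalizedBetaKernel_sub_le (a c : ℂ) : ∃ C K : ℝ, ∀ s > 0,
    ‖normalizedBetaKernel a c s - (1 + (-a - (c - 1) / 2) * s)‖ ≤ C * (s ^ 2 * rexp (K * s)) := by
  set M := ‖a‖ + 5 * ‖c - 1‖
  have hM : 0 ≤ M := by positivity
  obtain ⟨C, hC⟩ := exists_le_mul_sq_mul_exp (s₀ := 1 / (M + 1)) (by positivity) (by positivity)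
    (by positivity : 0 ≤ |a.re| + |c.re - 1| + 1)
    (fun s hs hss => norm_normalizedBetaKernel_sub_le_sq hs
      (hss.trans ((div_le_one (by positivity)).mpr (by linarith)))
      (by rw [le_div_iff₀' (by positivity)] at hss; nlinarith))
    (fun s hs => norm_normalizedBetaKernel_sub_le_exp hs)
  exact ⟨C, _, hC⟩

end NormalizedBetaKernel

lemma image_exp_neg_Ioi_zero : (fun s : ℝ => rexp (-s)) '' Ioi 0 = Ioo 0 1 := by
  ext t
  constructor
  · rintro ⟨s, hs, rfl⟩
    exact ⟨Real.exp_pos _, Real.exp_lt_one_iff.mpr (neg_lt_zero.mpr hs)⟩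
  · rintro ⟨h₀, h₁⟩
    exact ⟨-Real.log t, neg_pos.mpr (Real.log_neg h₀ h₁), by simp [Real.exp_log h₀]⟩

theorem betaIntegral_eq_integral_exp_neg (u v : ℂ) :
    betaIntegral u v
      = ∫ s in Ioi (0:ℝ), cexp (-u * s) * ((1 - rexp (-s) : ℝ) : ℂ) ^ (v - 1) := by
  have hderiv : ∀ s ∈ Ioi (0:ℝ),
      HasDerivWithinAt (fun s : ℝ => rexp (-s)) (-rexp (-s)) (Ioi 0) s := fun s _ => by
    simpa using ((hasDerivAt_neg' s).exp).hasDerivWithinAt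
  have hinj : InjOn (fun s : ℝ => rexp (-s)) (Ioi 0) :=
    fun _ _ _ _ h => neg_injective (Real.exp_injective h)
  rw [betaIntegral, intervalIntegral.integral_of_le zero_le_one, integral_Ioc_eq_integral_Ioo,
    ← image_exp_neg_Ioi_zero,
    integral_image_eq_integral_abs_deriv_smul measurableSet_Ioi hderiv hinj]
  refine setIntegral_congr_fun measurableSet_Ioi fun s _ => ?_
  rw [abs_neg, abs_of_pos (Real.exp_pos _), real_smul,
    cpow_def_of_ne_zero (by exact_mod_cast (Real.exp_pos _).ne'),
    ← ofReal_log (Real.exp_pos _).le, Real.log_exp, ofReal_exp, ← mul_assoc, ← Complex.exp_add]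
  push_cast
  ring_nf

lemma Gamma_div_Gamma_add_eq_integral {a c : ℂ} {x : ℝ} (hxa : 0 < ((x:ℂ) + a).re)
    (hc : 0 < c.re) :
    Complex.Gamma (x + a) / Complex.Gamma (x + a + c)
      = (∫ s in Ioi (0:ℝ), (s:ℂ) ^ (c - 1) * cexp (-(x * s)) * normalizedBetaKernel a c s)
        / Complex.Gamma c := by
  have hΓc := Complex.Gamma_ne_zero_of_re_pos hc
  rw [eq_div_iff hΓc, div_mul_eq_mul_div, ← betaIntegral_eq_Gamma_mul_div _ _ hxa hc,
    betaIntegral_eq_integral_exp_neg]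
  refine setIntegral_congr_fun measurableSet_Ioi fun s (hs : 0 < s) => ?_
  have hsplit : 1 - rexp (-s) = s * expNegAverage s := by
    rw [expNegAverage, mul_div_cancel₀ _ hs.ne']
  rw [hsplit, ofReal_mul, mul_cpow_ofReal_nonneg hs.le (expNegAverage_pos hs).le,
    normalizedBetaKernel, show -((x:ℂ) + a) * s = -(x * s) + -a * s by ring, Complex.exp_add]
  ring

noncomputable def gammaRatioRemainder (a c : ℂ) (x : ℝ) : ℂ :=
  Complex.Gamma (x + a) / Complex.Gamma (x + a + c)
    - (x:ℂ) ^ (-c) * (1 - c * (2 * a + c - 1) / (2 * x))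

lemma gammaRatioRemainder_isBigO_of_re_pos (a : ℂ) {c : ℂ} (hc : 0 < c.re) :
    gammaRatioRemainder a c =O[atTop] fun x : ℝ => x ^ (-c.re - 2) := by
  obtain ⟨C, K, hbound⟩ := exists_norm_normalizedBetaKernel_sub_le a c
  have hwatson := (integral_cpow_mul_exp_mul_sub_isBigO hc
    measurable_normalizedBetaKernel.aestronglyMeasurable hbound).const_mul_left
    (Complex.Gamma c)⁻¹
  refine hwatson.congr' ?_ EventuallyEq.rfl
  filter_upwards [eventually_gt_atTop (max 0 (-a.re))] with x hx
  have hx₀ : 0 < x := (le_max_left _ _).trans_lt hx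
  have hxa : 0 < ((x:ℂ) + a).re := by simp; linarith [le_max_right 0 (-a.re)]
  have hΓc := Complex.Gamma_ne_zero_of_re_pos hc
  have hc₀ : c ≠ 0 := by rintro rfl; simp at hc
  rw [gammaRatioRemainder, Gamma_div_Gamma_add_eq_integral hxa hc, Complex.Gamma_add_one _ hc₀,
    cpow_neg_add_one (ofReal_ne_zero.mpr hx₀.ne')]
  field_simp
  ring

lemma gammaRatioRemainder_eq_of_add_one {a c : ℂ} {x : ℝ} (hx₀ : 0 < x)
    (hxac : (x:ℂ) + a + c ≠ 0) :
    gammaRatioRemainder a c x = ((x:ℂ) + (a + c)) * gammaRatioRemainder a (c + 1) x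
      - (a + c) * ((c + 1) * (2 * a + c) / 2) * ((x:ℂ) ^ (-c) * ((x:ℂ) ^ 2)⁻¹) := by
  have hx : (x:ℂ) ≠ 0 := ofReal_ne_zero.mpr hx₀.ne'
  have hΓ : Complex.Gamma (x + a + (c + 1)) = ((x:ℂ) + a + c) * Complex.Gamma (x + a + c) := by
    rw [← add_assoc, Complex.Gamma_add_one _ hxac]
  by_cases hΓ₀ : Complex.Gamma (x + a + c) = 0
  · simp only [gammaRatioRemainder, hΓ, hΓ₀, cpow_neg_add_one hx, mul_zero, div_zero]
    field_simp
    ring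
  · simp only [gammaRatioRemainder, hΓ, cpow_neg_add_one hx]
    field_simp
    ring

lemma gammaRatioRemainder_isBigO_of_add_one {a c : ℂ}
    (h : gammaRatioRemainder a (c + 1) =O[atTop] fun x : ℝ => x ^ (-(c + 1).re - 2)) :
    gammaRatioRemainder a c =O[atTop] fun x : ℝ => x ^ (-c.re - 2) := by
  have hlin : (fun x : ℝ => (x:ℂ) + (a + c)) =O[atTop] fun x : ℝ => x :=
    (isBigO_ofReal_left.mpr (isBigO_refl _ _)).add (isLittleO_const_id_atTop (a + c)).isBigO
  have hmain : (fun x : ℝ => ((x:ℂ) + (a + c)) * gammaRatioRemainder a (c + 1) x)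
      =O[atTop] fun x : ℝ => x ^ (-c.re - 2) := by
    refine (hlin.mul h).trans_eventuallyEq ?_
    filter_upwards [eventually_gt_atTop 0] with x hx
    rw [show -c.re - 2 = 1 + (-(c + 1).re - 2) by simp; ring, rpow_add hx, rpow_one]
  have hcorr : (fun x : ℝ => (x:ℂ) ^ (-c) * ((x:ℂ) ^ 2)⁻¹)
      =O[atTop] fun x : ℝ => x ^ (-c.re - 2) := by
    refine IsBigO.of_bound 1 ?_
    filter_upwards [eventually_gt_atTop 0] with x hx
    rw [norm_mul, norm_inv, norm_pow, norm_cpow_eq_rpow_re_of_pos hx, norm_real,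
      Real.norm_eq_abs, Real.norm_eq_abs, abs_of_pos hx, abs_of_pos (by positivity), one_mul,
      ← rpow_two, ← rpow_neg hx.le, ← rpow_add hx]
    simp [sub_eq_add_neg]
  refine (hmain.sub (hcorr.const_mul_left ((a + c) * ((c + 1) * (2 * a + c) / 2)))).congr' ?_
    EventuallyEq.rfl
  filter_upwards [eventually_gt_atTop (max 0 (-a.re - c.re))] with x hx
  have hx₀ : 0 < x := (le_max_left _ _).trans_lt hx
  have hxac : (x:ℂ) + a + c ≠ 0 := fun h => by
    have := congrArg re h
    simp at this
    linarith [le_max_right 0 (-a.re - c.re)]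
  exact (gammaRatioRemainder_eq_of_add_one hx₀ hxac).symm

theorem gammaRatioRemainder_isBigO (a c : ℂ) :
    gammaRatioRemainder a c =O[atTop] fun x : ℝ => x ^ (-c.re - 2) := by
  obtain ⟨n, hn⟩ := exists_nat_gt (-c.re)
  induction n generalizing c with
  | zero => exact gammaRatioRemainder_isBigO_of_re_pos a (by simpa using hn)
  | succ n ih =>
    exact gammaRatioRemainder_isBigO_of_add_one (ih (c + 1) (by simp; push_cast at hn; linarith))

lemma norm_sin_le_exp_abs_im (z : ℂ) : ‖Complex.sin z‖ ≤ rexp |z.im| := by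
  have h₁ : ‖cexp (-z * I)‖ ≤ rexp |z.im| := by
    rw [Complex.norm_exp]; exact Real.exp_le_exp.mpr (by simpa using le_abs_self z.im)
  have h₂ : ‖cexp (z * I)‖ ≤ rexp |z.im| := by
    rw [Complex.norm_exp]; exact Real.exp_le_exp.mpr (by simpa using neg_le_abs z.im)
  rw [Complex.sin, norm_div, norm_mul, Complex.norm_I, mul_one, Complex.norm_ofNat]
  linarith [norm_sub_le (cexp (-z * I)) (cexp (z * I))]

lemma cBeta_sub_eq {α γ z : ℂ} (hsin : Complex.sin (π * (z - α)) ≠ 0)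
    (hΓ : Complex.Gamma (z + (1 - α - γ)) ≠ 0) :
    cBeta (α - z) γ = Complex.Gamma γ * (Complex.sin (π * (z - α - γ)) / Complex.sin (π * (z - α)))
      * (Complex.Gamma (z + (1 - α - γ)) / Complex.Gamma (z + (1 - α - γ) + γ)) := by
  have hA : Complex.Gamma (α - z) * Complex.Gamma (z + (1 - α - γ) + γ)
      = -(π / Complex.sin (π * (z - α))) := by
    rw [show z + (1 - α - γ) + γ = 1 - (α - z) by ring, Complex.Gamma_mul_Gamma_one_sub,
      show (π:ℂ) * (α - z) = -(π * (z - α)) by ring, Complex.sin_neg, div_neg]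
  have hB : Complex.Gamma (α - z + γ) * Complex.Gamma (z + (1 - α - γ))
      = -(π / Complex.sin (π * (z - α - γ))) := by
    rw [show z + (1 - α - γ) = 1 - (α - z + γ) by ring, Complex.Gamma_mul_Gamma_one_sub,
      show (π:ℂ) * (α - z + γ) = -(π * (z - α - γ)) by ring, Complex.sin_neg, div_neg]
  have hΓ' : Complex.Gamma (z + (1 - α - γ) + γ) ≠ 0 := by
    intro h
    rw [h, mul_zero, eq_comm, neg_eq_zero, div_eq_zero_iff] at hA
    exact hA.elim (ofReal_ne_zero.mpr pi_ne_zero) hsin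
  rw [cBeta]
  by_cases hsin' : Complex.sin (π * (z - α - γ)) = 0
  -- `Γ(α - z + γ)` then sits at a pole, where Mathlib's `Gamma` is `0`, so both sides vanish.
  · rw [hsin', div_zero, neg_zero, mul_eq_zero, or_iff_left hΓ] at hB
    simp [hB, hsin']
  · rw [eq_div_of_mul_eq hΓ' hA, eq_div_of_mul_eq hΓ hB]
    field_simp

theorem stmt15_general (α γ : ℂ) (δ : ℝ) (hδ : 0 < δ) :
    (fun ζ : ℝ => cBeta (α - ζ) γ
        - Complex.Gamma γ
            * (Complex.sin ((π : ℂ) * ((ζ : ℂ) - α - γ))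
                / Complex.sin ((π : ℂ) * ((ζ : ℂ) - α)))
            * (ζ : ℂ) ^ (-γ) * (1 + γ * (2 * α + γ - 1) / (2 * ζ)))
      =O[atTop ⊓ 𝓟 {ζ : ℝ | δ ≤ ‖Complex.sin ((π : ℂ) * ((ζ : ℂ) - α))‖}]
        (fun ζ : ℝ => ζ ^ (-γ.re - 2)) := by
  set l := atTop ⊓ 𝓟 {ζ : ℝ | δ ≤ ‖Complex.sin ((π : ℂ) * ((ζ : ℂ) - α))‖}
  have hsin : ∀ᶠ ζ : ℝ in l, δ ≤ ‖Complex.sin ((π : ℂ) * ((ζ : ℂ) - α))‖ :=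
    eventually_inf_principal.mpr (.of_forall fun _ h => h)
  have hratio : (fun ζ : ℝ => Complex.Gamma γ * (Complex.sin ((π : ℂ) * ((ζ : ℂ) - α - γ))
      / Complex.sin ((π : ℂ) * ((ζ : ℂ) - α)))) =O[l] fun _ => (1 : ℝ) := by
    refine IsBigO.of_bound (‖Complex.Gamma γ‖ * (rexp (π * |α.im + γ.im|) / δ)) ?_
    filter_upwards [hsin] with ζ hζ
    have hnum := norm_sin_le_exp_abs_im ((π : ℂ) * ((ζ : ℂ) - α - γ))
    rw [show ((π : ℂ) * ((ζ : ℂ) - α - γ)).im = -(π * (α.im + γ.im)) by simp; ring, abs_neg,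
      abs_mul, abs_of_pos pi_pos] at hnum
    rw [norm_mul, norm_div, norm_one, mul_one]
    gcongr
  have hrem : gammaRatioRemainder (1 - α - γ) γ =O[l] fun ζ : ℝ => ζ ^ (-γ.re - 2) :=
    (gammaRatioRemainder_isBigO _ _).mono inf_le_left
  refine (hratio.mul hrem).congr' ?_ (.of_forall fun _ => one_mul _)
  filter_upwards [hsin, (eventually_gt_atTop (α.re + γ.re)).filter_mono inf_le_left]
    with ζ hζ hζ'
  have hsin₀ : Complex.sin ((π : ℂ) * ((ζ : ℂ) - α)) ≠ 0 := fun h => by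
    rw [h, norm_zero] at hζ; linarith
  have hΓ : Complex.Gamma (ζ + (1 - α - γ)) ≠ 0 :=
    Complex.Gamma_ne_zero_of_re_pos (by simp; linarith)
  rw [cBeta_sub_eq hsin₀ hΓ, gammaRatioRemainder]
  field_simp
  ring

/-- As real `ζ → +∞` with `|sin(π(ζ-α))|` bounded away from `0`,
`B(α-ζ, γ) = Γ(γ) (sin(π(ζ-α-γ))/sin(π(ζ-α))) ζ^{-γ} [1 + γ(2α+γ-1)/(2ζ) + O(ζ^{-2})]`. -/
theorem stmt15 (α γ : ℂ) (hγ : ∀ n : ℕ, γ ≠ -(n : ℂ)) (δ : ℝ) (hδ : 0 < δ) :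
    (fun ζ : ℝ => cBeta (α - ζ) γ
        - Complex.Gamma γ
            * (Complex.sin ((π : ℂ) * ((ζ : ℂ) - α - γ))
                / Complex.sin ((π : ℂ) * ((ζ : ℂ) - α)))
            * (ζ : ℂ) ^ (-γ) * (1 + γ * (2 * α + γ - 1) / (2 * ζ)))
      =O[atTop ⊓ 𝓟 {ζ : ℝ | δ ≤ ‖Complex.sin ((π : ℂ) * ((ζ : ℂ) - α))‖}]
        (fun ζ : ℝ => ζ ^ (-γ.re - 2)) :=
  stmt15_general α γ δ hδ
end

section
/- Suppose ζ_n = n + β + A₁/(n+β) + A₂/(n+β)² + O(n^{−3}) as n → +∞, where β > 0 and A₁, A₂ are real. Then for fixed complex z (avoiding poles) and as N → +∞, ∏_{n≥N} (1+z/(n+α))/(1+z/ζ_n) = [Γ(N+α)Γ(N+β+z)/(Γ(N+β)Γ(N+α+z))]·exp[ A₁(f_{1,1}(β,β;N) − f_{1,1}(z+β,β;N)) + A₂(f_{1,2}(β,β;N) − f_{1,2}(z+β,β;N)) + O(N^{−3}) ], where f_{α₁,α₂}(z₁,z₂;N) = ∑_{n≥N} (n+z₁)^{−α₁}(n+z₂)^{−α₂}.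 -/
/-!
Split the `n`-th factor as `(1 + z/(n+α))/(1 + z/(n+β))` times `R_n = (1 + z/(n+β))/(1 + z/ζ_n)`.
The first factor is `(n+β)(n+α+z)/((n+α)(n+β+z))`; since both numerator and denominator have
the same sum of shifts, Euler's limit formula `Γ(s) = lim kˢ k!/∏_{j≤k}(s+j)` evaluates its
tail product as the Gamma ratio.

For `R_n`, put `δ_n = ζ_n - n - β = O(n⁻¹)`. Then `R_n - 1 = zδ_n/((n+β)(ζ_n+z)) = O(n⁻³)`, and
`log R_n = δ_n (1/(n+β) - 1/(n+β+z)) + O(n⁻⁵)`. Replacing `δ_n` by `A₁/(n+β) + A₂/(n+β)²`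
costs `O(n⁻³)·O(n⁻¹)`, and the main terms so obtained sum to the `f₁₁` and `f₁₂` differences.
Every error is `O(n⁻⁴)`, whose tails are `O(N⁻³)`; exponentiating the sum of the logarithms gives
the tail product of the `R_n`.
-/

open Real Complex Filter Asymptotics

/-- `f_{1,1}(z₁,z₂;N) = ∑_{n≥N} (n+z₁)⁻¹ (n+z₂)⁻¹`. -/
noncomputable def f11 (z₁ z₂ : ℂ) (N : ℕ) : ℂ :=
  ∑' n : ℕ, (((N : ℂ) + n) + z₁)⁻¹ * (((N : ℂ) + n) + z₂)⁻¹

/-- `f_{1,2}(z₁,z₂;N) = ∑_{n≥N} (n+z₁)⁻¹ (n+z₂)⁻²`. -/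
noncomputable def f12 (z₁ z₂ : ℂ) (N : ℕ) : ℂ :=
  ∑' n : ℕ, (((N : ℂ) + n) + z₁)⁻¹ * ((((N : ℂ) + n) + z₂) ^ 2)⁻¹

open Topology

lemma isBigO_inv_pow_of_le {j k : ℕ} (h : j ≤ k) :
    (fun n : ℕ => (n : ℝ)⁻¹ ^ k) =O[atTop] fun n => (n : ℝ)⁻¹ ^ j := by
  refine IsBigO.of_bound' ?_
  filter_upwards [eventually_ge_atTop 1] with n hn
  have hn' : (1 : ℝ) ≤ n := by exact_mod_cast hn
  simp only [norm_pow, norm_inv, Real.norm_natCast]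
  exact pow_le_pow_of_le_one (by positivity) (inv_le_one_of_one_le₀ hn') h

lemma isBigO_inv_pow_inv {k : ℕ} (hk : 1 ≤ k) :
    (fun n : ℕ => (n : ℝ)⁻¹ ^ k) =O[atTop] fun n => (n : ℝ)⁻¹ := by
  simpa using isBigO_inv_pow_of_le hk

lemma isBigO_natCast_inv_one : (fun n : ℕ => (n : ℝ)⁻¹) =O[atTop] fun _ => (1 : ℝ) := by
  simpa using isBigO_inv_pow_of_le (zero_le_one (α := ℕ))

lemma summable_of_isBigO_inv_pow {E : Type*} [NormedAddCommGroup E] [CompleteSpace E]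
    {f : ℕ → E} {k : ℕ} (hk : 1 < k) (hf : f =O[atTop] fun n => (n : ℝ)⁻¹ ^ k) :
    Summable f :=
  summable_of_isBigO_nat (by simpa only [inv_pow] using summable_nat_pow_inv.2 hk) hf

lemma inv_pow_add_two_le {x : ℝ} (hx : 1 ≤ x) (k : ℕ) :
    x⁻¹ ^ (k + 2) ≤ 2 ^ (k + 1) * (x⁻¹ ^ (k + 1) - (x + 1)⁻¹ ^ (k + 1)) := by
  have hx0 : 0 < x := by linarith
  have hgap : x ^ k ≤ (x + 1) ^ (k + 1) - x ^ (k + 1) := by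
    have := pow_le_pow_left₀ hx0.le (le_add_of_nonneg_right zero_le_one) k
    rw [pow_succ, pow_succ]
    nlinarith
  rw [inv_pow, inv_pow, inv_pow, inv_sub_inv (by positivity) (by positivity), mul_div_assoc',
    le_div_iff₀ (by positivity), inv_mul_eq_div, div_le_iff₀ (by positivity)]
  calc x ^ (k + 1) * (x + 1) ^ (k + 1) ≤ x ^ (k + 1) * (2 * x) ^ (k + 1) := by
        gcongr; linarith
    _ = 2 ^ (k + 1) * x ^ k * x ^ (k + 2) := by ring
    _ ≤ 2 ^ (k + 1) * ((x + 1) ^ (k + 1) - x ^ (k + 1)) * x ^ (k + 2) := by gcongr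

lemma tsum_inv_pow_nat_add_le {N : ℕ} (hN : 1 ≤ N) (k : ℕ) :
    ∑' n : ℕ, ((N + n : ℕ) : ℝ)⁻¹ ^ (k + 2) ≤ 2 ^ (k + 1) * (N : ℝ)⁻¹ ^ (k + 1) := by
  set T : ℕ → ℝ := fun n => 2 ^ (k + 1) * ((N + n : ℕ) : ℝ)⁻¹ ^ (k + 1)
  refine Real.tsum_le_of_sum_range_le (fun n => by positivity) fun K => ?_
  calc ∑ n ∈ Finset.range K, ((N + n : ℕ) : ℝ)⁻¹ ^ (k + 2)
      ≤ ∑ n ∈ Finset.range K, (T n - T (n + 1)) := by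
        refine Finset.sum_le_sum fun n _ => ?_
        have := inv_pow_add_two_le (x := ((N + n : ℕ) : ℝ)) (by norm_cast; omega) k
        simp only [T, ← mul_sub]
        push_cast at this ⊢
        rwa [← add_assoc]
    _ = T 0 - T K := Finset.sum_range_sub' T K
    _ ≤ 2 ^ (k + 1) * (N : ℝ)⁻¹ ^ (k + 1) := by
        simp only [T, add_zero, sub_le_self_iff]
        positivity

theorem isBigO_tsum_nat_add {E : Type*} [NormedAddCommGroup E] [CompleteSpace E]
    {g : ℕ → E} {k : ℕ} (hg : g =O[atTop] fun n => (n : ℝ)⁻¹ ^ (k + 2)) :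
    (fun N => ∑' n, g (N + n)) =O[atTop] fun N => (N : ℝ)⁻¹ ^ (k + 1) := by
  obtain ⟨C, hC0, hC⟩ := hg.exists_pos
  obtain ⟨M, hM⟩ := eventually_atTop.1 hC.bound
  refine IsBigO.of_bound (C * 2 ^ (k + 1)) ?_
  filter_upwards [eventually_ge_atTop M, eventually_ge_atTop 1] with N hNM hN
  have hbound : ∀ n, ‖g (N + n)‖ ≤ C * ((N + n : ℕ) : ℝ)⁻¹ ^ (k + 2) := fun n => by
    simpa only [norm_pow, norm_inv, Real.norm_natCast] using hM (N + n) (by omega)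
  have hsum : Summable fun n : ℕ => ((N + n : ℕ) : ℝ)⁻¹ ^ (k + 2) := by
    simpa only [add_comm N] using (summable_nat_add_iff N).2
      (summable_of_isBigO_inv_pow (k := k + 2) (by omega) (isBigO_refl _ _))
  calc ‖∑' n, g (N + n)‖ ≤ ∑' n, C * ((N + n : ℕ) : ℝ)⁻¹ ^ (k + 2) :=
        tsum_of_norm_bounded (hsum.mul_left C).hasSum hbound
    _ = C * ∑' n : ℕ, ((N + n : ℕ) : ℝ)⁻¹ ^ (k + 2) := tsum_mul_left
    _ ≤ C * (2 ^ (k + 1) * (N : ℝ)⁻¹ ^ (k + 1)) := by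
        gcongr
        exact tsum_inv_pow_nat_add_le hN k
    _ = C * 2 ^ (k + 1) * ‖(N : ℝ)⁻¹ ^ (k + 1)‖ := by
        rw [norm_pow, norm_inv, Real.norm_natCast]
        ring

section BoundedShifts

variable {u : ℕ → ℂ}

lemma isBigO_sub_natCast_of_eq {c : ℂ} (hu : ∀ n, u n - n = c) :
    (fun n => u n - n) =O[atTop] fun _ => (1 : ℝ) :=
  (isBigO_const_const c (one_ne_zero' ℝ) atTop).congr_left fun n => (hu n).symm

lemma isBigO_natCast_add_sub_natCast (c : ℂ) :
    (fun n : ℕ => (n : ℂ) + c - n) =O[atTop] fun _ => (1 : ℝ) :=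
  isBigO_sub_natCast_of_eq fun _ => add_sub_cancel_left _ _

lemma isBigO_add_sub_natCast (hu : (fun n => u n - n) =O[atTop] fun _ => (1 : ℝ)) (c : ℂ) :
    (fun n => u n + c - n) =O[atTop] fun _ => (1 : ℝ) :=
  (hu.add (isBigO_const_const c (one_ne_zero' ℝ) atTop)).congr_left fun n => by ring

lemma isBigO_sub_natCast_of_isBigO_sub_natCast_add_const {b : ℂ}
    (hu : (fun n => u n - (n + b)) =O[atTop] fun n => (n : ℝ)⁻¹) :
    (fun n => u n - n) =O[atTop] fun _ => (1 : ℝ) :=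
  ((hu.trans isBigO_natCast_inv_one).add (isBigO_const_const b (one_ne_zero' ℝ) atTop)).congr_left
    fun n => by ring

lemma eventually_half_le_norm_of_isBigO_sub_natCast
    (hu : (fun n => u n - n) =O[atTop] fun _ => (1 : ℝ)) :
    ∀ᶠ n : ℕ in atTop, (n : ℝ) / 2 ≤ ‖u n‖ := by
  obtain ⟨C, hC⟩ := hu.bound
  filter_upwards [hC, (tendsto_natCast_atTop_atTop (R := ℝ)).eventually_ge_atTop (2 * C)]
    with n hn hn2
  have := norm_sub_le (u n) (u n - n)
  rw [sub_sub_cancel, Complex.norm_natCast] at this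
  rw [norm_one, mul_one] at hn
  linarith

lemma eventually_ne_zero_of_isBigO_sub_natCast
    (hu : (fun n => u n - n) =O[atTop] fun _ => (1 : ℝ)) : ∀ᶠ n : ℕ in atTop, u n ≠ 0 := by
  filter_upwards [eventually_half_le_norm_of_isBigO_sub_natCast hu, eventually_gt_atTop 0]
    with n hn hn0
  rw [← norm_pos_iff]
  have : (0 : ℝ) < n := by exact_mod_cast hn0
  linarith

lemma isBigO_inv_of_isBigO_sub_natCast (hu : (fun n => u n - n) =O[atTop] fun _ => (1 : ℝ)) :
    (fun n => (u n)⁻¹) =O[atTop] fun n => (n : ℝ)⁻¹ := by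
  refine IsBigO.of_bound 2 ?_
  filter_upwards [eventually_half_le_norm_of_isBigO_sub_natCast hu, eventually_gt_atTop 0]
    with n hn hn0
  have : (0 : ℝ) < n := by exact_mod_cast hn0
  rw [norm_inv, norm_inv, Real.norm_natCast]
  calc ‖u n‖⁻¹ ≤ ((n : ℝ) / 2)⁻¹ := inv_anti₀ (by positivity) hn
    _ = 2 * (n : ℝ)⁻¹ := by rw [inv_div, div_eq_mul_inv]

lemma eventually_one_add_div_div_ne_zero {v : ℕ → ℂ}
    (hu : (fun n => u n - n) =O[atTop] fun _ => (1 : ℝ))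
    (hv : (fun n => v n - n) =O[atTop] fun _ => (1 : ℝ)) (z : ℂ) :
    ∀ᶠ n in atTop, (1 + z / u n) / (1 + z / v n) ≠ 0 := by
  filter_upwards [eventually_ne_zero_of_isBigO_sub_natCast hu,
    eventually_ne_zero_of_isBigO_sub_natCast (isBigO_add_sub_natCast hu z),
    eventually_ne_zero_of_isBigO_sub_natCast hv,
    eventually_ne_zero_of_isBigO_sub_natCast (isBigO_add_sub_natCast hv z)] with n h1 h2 h3 h4
  rw [one_add_div h1, one_add_div h3]
  exact div_ne_zero (div_ne_zero h2 h1) (div_ne_zero h4 h3)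

lemma eventually_forall_add_natCast_ne_zero (c : ℂ) :
    ∀ᶠ N : ℕ in atTop, ∀ n : ℕ, (N : ℂ) + c + n ≠ 0 := by
  filter_upwards [(tendsto_natCast_atTop_atTop (R := ℝ)).eventually_gt_atTop (-c.re)]
    with N hN n h
  have := congrArg re h
  simp only [add_re, natCast_re, zero_re] at this
  linarith [n.cast_nonneg (α := ℝ)]

end BoundedShifts

lemma prod_range_eq_GammaSeq {a b c d : ℂ} (habcd : a + b = c + d)
    (ha : ∀ n : ℕ, a + n ≠ 0) (hb : ∀ n : ℕ, b + n ≠ 0) (hc : ∀ n : ℕ, c + n ≠ 0)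
    (hd : ∀ n : ℕ, d + n ≠ 0) {k : ℕ} (hk : k ≠ 0) :
    ∏ n ∈ Finset.range (k + 1), (a + n) * (b + n) / ((c + n) * (d + n)) =
      GammaSeq c k * GammaSeq d k / (GammaSeq a k * GammaSeq b k) := by
  have hprod : ∀ s : ℂ, (∀ n : ℕ, s + n ≠ 0) → ∏ n ∈ Finset.range (k + 1), (s + n) ≠ 0 :=
    fun s hs => Finset.prod_ne_zero_iff.2 fun n _ => hs n
  have hk' : (k : ℂ) ≠ 0 := Nat.cast_ne_zero.2 hk
  have hpow : (k : ℂ) ^ c * (k : ℂ) ^ d = (k : ℂ) ^ a * (k : ℂ) ^ b := by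
    rw [← cpow_add _ _ hk', ← cpow_add _ _ hk', habcd]
  have hpow0 : ∀ s : ℂ, (k : ℂ) ^ s ≠ 0 := fun s => cpow_ne_zero_iff.2 (Or.inl hk')
  simp only [Complex.GammaSeq, Finset.prod_div_distrib, Finset.prod_mul_distrib]
  have := hprod a ha; have := hprod b hb; have := hprod c hc; have := hprod d hd
  have := hpow0 a; have := hpow0 b
  have : (k.factorial : ℂ) ≠ 0 := Nat.cast_ne_zero.2 k.factorial_ne_zero
  field_simp
  linear_combination -hpow

theorem hasProd_mul_div_mul_eq_Gamma {a b c d : ℂ} (habcd : a + b = c + d)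
    (ha : ∀ n : ℕ, a + n ≠ 0) (hb : ∀ n : ℕ, b + n ≠ 0) (hc : ∀ n : ℕ, c + n ≠ 0)
    (hd : ∀ n : ℕ, d + n ≠ 0) :
    HasProd (fun n : ℕ => (a + n) * (b + n) / ((c + n) * (d + n)))
      (Gamma c * Gamma d / (Gamma a * Gamma b)) := by
  have hGamma : ∀ s : ℂ, (∀ n : ℕ, s + n ≠ 0) → Gamma s ≠ 0 := fun s hs =>
    Gamma_ne_zero fun m h => hs m (by rw [h, neg_add_cancel])
  -- `a + b = c + d` makes each factor `1 + O(n⁻²)`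
  have hmul : Multipliable fun n : ℕ => (a + n) * (b + n) / ((c + n) * (d + n)) := by
    have hinv (s : ℂ) : (fun n : ℕ => (s + n)⁻¹) =O[atTop] fun n => (n : ℝ)⁻¹ :=
      isBigO_inv_of_isBigO_sub_natCast (isBigO_sub_natCast_of_eq fun _ => add_sub_cancel_right _ _)
    have hsum : Summable fun n : ℕ => (a * b - c * d) * ((c + n)⁻¹ * (d + n)⁻¹) :=
      summable_of_isBigO_inv_pow one_lt_two <|
        (((hinv c).mul (hinv d)).const_mul_left _).congr_right fun n => by ring
    convert Complex.multipliable_one_add_of_summable hsum using 2 with n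
    rw [← mul_inv, ← div_eq_mul_inv, one_add_div (mul_ne_zero (hc n) (hd n))]
    congr 1
    linear_combination (n : ℂ) * habcd
  have hlim := ((GammaSeq_tendsto_Gamma c).mul (GammaSeq_tendsto_Gamma d)).div
    ((GammaSeq_tendsto_Gamma a).mul (GammaSeq_tendsto_Gamma b))
    (mul_ne_zero (hGamma a ha) (hGamma b hb))
  have hpartial := hmul.hasProd.tendsto_prod_nat.comp (tendsto_add_atTop_nat 1)
  have hvalue := tendsto_nhds_unique hpartial <| hlim.congr' <| by
    filter_upwards [eventually_ne_atTop 0] with k hk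
    exact (prod_range_eq_GammaSeq habcd ha hb hc hd hk).symm
  exact hvalue ▸ hmul.hasProd

theorem isBigO_log_one_add_div_div_sub {b z : ℂ} {ζ : ℕ → ℂ}
    (hδ : (fun n => ζ n - (n + b)) =O[atTop] fun n => (n : ℝ)⁻¹) :
    (fun n : ℕ => log ((1 + z / (n + b)) / (1 + z / ζ n))
        - (ζ n - (n + b)) * (((n : ℂ) + b)⁻¹ - ((n : ℂ) + b + z)⁻¹))
      =O[atTop] fun n => (n : ℝ)⁻¹ ^ 5 := by
  set δ := fun n : ℕ => ζ n - (n + b)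
  have hb := isBigO_natCast_add_sub_natCast b
  have hbz := isBigO_add_sub_natCast hb z
  have hζ := isBigO_sub_natCast_of_isBigO_sub_natCast_add_const hδ
  have hζz := isBigO_add_sub_natCast hζ z
  set w := fun n => z * δ n * ((n : ℂ) + b)⁻¹ * (ζ n + z)⁻¹
  have hw : w =O[atTop] fun n => (n : ℝ)⁻¹ ^ 3 :=
    (((hδ.const_mul_left z).mul (isBigO_inv_of_isBigO_sub_natCast hb)).mul
      (isBigO_inv_of_isBigO_sub_natCast hζz)).congr_right fun n => by ring
  have hw0 : Tendsto w atTop (𝓝 0) := hw.trans_tendsto <| by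
    simpa using (tendsto_inv_atTop_zero.comp (tendsto_natCast_atTop_atTop (R := ℝ))).pow 3
  have hlog : (fun n => log (1 + w n) - w n) =O[atTop] fun n => (n : ℝ)⁻¹ ^ 5 :=
    (log_sub_self_isBigO.comp_tendsto hw0).trans <| (hw.pow 2).trans <|
      (isBigO_inv_pow_of_le (by norm_num : 5 ≤ 6)).congr_left fun n => by ring
  have hquad : (fun n => z * δ n ^ 2 * ((n : ℂ) + b)⁻¹ * (ζ n + z)⁻¹ * ((n : ℂ) + b + z)⁻¹)
      =O[atTop] fun n => (n : ℝ)⁻¹ ^ 5 :=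
    ((((hδ.pow 2).const_mul_left z).mul (isBigO_inv_of_isBigO_sub_natCast hb)).mul
      (isBigO_inv_of_isBigO_sub_natCast hζz)).mul (isBigO_inv_of_isBigO_sub_natCast hbz)
      |>.congr_right fun n => by ring
  -- `w n` and `δ n * ((n + b)⁻¹ - (n + b + z)⁻¹)` differ by exactly this quadratic term
  refine (hlog.sub hquad).congr' ?_ EventuallyEq.rfl
  filter_upwards [eventually_ne_zero_of_isBigO_sub_natCast hb,
    eventually_ne_zero_of_isBigO_sub_natCast hbz, eventually_ne_zero_of_isBigO_sub_natCast hζ,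
    eventually_ne_zero_of_isBigO_sub_natCast hζz] with n h1 h2 h3 h4
  have hratio : (1 + z / (n + b)) / (1 + z / ζ n) = 1 + w n := by
    simp only [w, δ]
    field_simp
    ring
  rw [hratio, sub_sub, sub_right_inj]
  simp only [w, δ]
  field_simp
  ring

lemma isBigO_inv_add_natCast_add (a c : ℂ) :
    (fun n : ℕ => (a + n + c)⁻¹) =O[atTop] fun n => (n : ℝ)⁻¹ :=
  isBigO_inv_of_isBigO_sub_natCast (isBigO_sub_natCast_of_eq (c := a + c) fun _ => by ring)

lemma hasSum_f11 (z₁ z₂ : ℂ) (N : ℕ) :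
    HasSum (fun n : ℕ => (((N : ℂ) + n) + z₁)⁻¹ * (((N : ℂ) + n) + z₂)⁻¹) (f11 z₁ z₂ N) := by
  have h₁ := isBigO_inv_add_natCast_add N z₁
  have h₂ := isBigO_inv_add_natCast_add N z₂
  exact (summable_of_isBigO_inv_pow one_lt_two ((h₁.mul h₂).congr_right fun n => by ring)).hasSum

lemma hasSum_f12 (z₁ z₂ : ℂ) (N : ℕ) :
    HasSum (fun n : ℕ => (((N : ℂ) + n) + z₁)⁻¹ * ((((N : ℂ) + n) + z₂) ^ 2)⁻¹)
      (f12 z₁ z₂ N) := by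
  have h₁ := isBigO_inv_add_natCast_add N z₁
  have h₂ := isBigO_inv_add_natCast_add N z₂
  refine (summable_of_isBigO_inv_pow (k := 3) (by norm_num) ?_).hasSum
  exact (h₁.mul (h₂.pow 2)).congr (fun n => by rw [inv_pow]) fun n => by ring

section TailProduct

variable (β A₁ A₂ : ℝ) (ζ : ℕ → ℝ) (z : ℂ)

def HasZetaExpansion : Prop :=
  (fun n : ℕ => ζ n - ((n : ℝ) + β) - A₁ / ((n : ℝ) + β) - A₂ / ((n : ℝ) + β) ^ 2)
    =O[atTop] (fun n : ℕ => (n : ℝ) ^ (-3 : ℤ))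

noncomputable def ratioFactor (m : ℕ) : ℂ := (1 + z / ((m : ℂ) + β)) / (1 + z / ζ m)

noncomputable def mainTerm (m : ℕ) : ℂ :=
  (A₁ / ((m : ℂ) + β) + A₂ / ((m : ℂ) + β) ^ 2) * (((m : ℂ) + β)⁻¹ - ((m : ℂ) + β + z)⁻¹)

lemma hasSum_mainTerm (N : ℕ) :
    HasSum (fun n => mainTerm β A₁ A₂ z (N + n))
      (A₁ * (f11 β β N - f11 (z + β) β N) + A₂ * (f12 β β N - f12 (z + β) β N)) := by
  refine ((((hasSum_f11 β β N).sub (hasSum_f11 (z + β) β N)).mul_left (A₁ : ℂ)).add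
    (((hasSum_f12 β β N).sub (hasSum_f12 (z + β) β N)).mul_left (A₂ : ℂ))).congr_fun fun n => ?_
  simp only [mainTerm]
  push_cast
  ring

variable {β A₁ A₂ ζ}

lemma HasZetaExpansion.isBigO_remainder (hζ : HasZetaExpansion β A₁ A₂ ζ) :
    (fun n : ℕ => (ζ n : ℂ) - (n + β) - A₁ / (n + β) - A₂ / ((n : ℂ) + β) ^ 2)
      =O[atTop] fun n => (n : ℝ)⁻¹ ^ 3 := by
  convert isBigO_ofReal_left.2 hζ using 1
  · ext n
    push_cast
    rfl
  · ext n
    simp [zpow_neg, inv_pow]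

lemma HasZetaExpansion.isBigO_sub (hζ : HasZetaExpansion β A₁ A₂ ζ) :
    (fun n : ℕ => (ζ n : ℂ) - (n + β)) =O[atTop] fun n => (n : ℝ)⁻¹ := by
  have hinv := isBigO_inv_of_isBigO_sub_natCast (isBigO_natCast_add_sub_natCast β)
  exact ((hζ.isBigO_remainder.trans (isBigO_inv_pow_inv (by norm_num))).add
    ((hinv.const_mul_left (A₁ : ℂ)).add
      (((hinv.pow 2).trans (isBigO_inv_pow_inv (by norm_num))).const_mul_left (A₂ : ℂ)))).congr_left
    fun n => by simp only [div_eq_mul_inv, inv_pow]; ring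

lemma HasZetaExpansion.isBigO_log_ratioFactor_sub_mainTerm (hζ : HasZetaExpansion β A₁ A₂ ζ) :
    (fun m => log (ratioFactor β ζ z m) - mainTerm β A₁ A₂ z m) =O[atTop]
      fun n => (n : ℝ)⁻¹ ^ 4 := by
  have hlog := isBigO_log_one_add_div_div_sub (b := β) (z := z) hζ.isBigO_sub
  have hdiff : (fun n : ℕ => ((n : ℂ) + β)⁻¹ - ((n : ℂ) + β + z)⁻¹) =O[atTop]
      fun n => (n : ℝ)⁻¹ :=
    (isBigO_inv_of_isBigO_sub_natCast (isBigO_natCast_add_sub_natCast β)).sub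
      (isBigO_inv_of_isBigO_sub_natCast (isBigO_sub_natCast_of_eq (c := β + z) fun n => by ring))
  refine ((hlog.trans (isBigO_inv_pow_of_le (by norm_num))).add
    ((hζ.isBigO_remainder.mul hdiff).congr_right fun n => by ring)).congr_left fun n => ?_
  simp only [ratioFactor, mainTerm]
  ring

lemma HasZetaExpansion.hasProd_ratioFactor (hζ : HasZetaExpansion β A₁ A₂ ζ) {N : ℕ}
    (hR : ∀ n, ratioFactor β ζ z (N + n) ≠ 0) :
    HasProd (fun n => ratioFactor β ζ z (N + n))
      (cexp (A₁ * (f11 β β N - f11 (z + β) β N) + A₂ * (f12 β β N - f12 (z + β) β N)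
        + ∑' n, (log (ratioFactor β ζ z (N + n)) - mainTerm β A₁ A₂ z (N + n)))) := by
  have hsum : Summable fun n => log (ratioFactor β ζ z (N + n)) - mainTerm β A₁ A₂ z (N + n) :=
    (summable_of_isBigO_inv_pow (by norm_num)
      (hζ.isBigO_log_ratioFactor_sub_mainTerm z)).comp_injective (add_right_injective N)
  refine ((hasSum_mainTerm β A₁ A₂ z N).add hsum.hasSum).cexp.congr_fun fun n => ?_
  simp only [Function.comp, add_sub_cancel]
  exact (exp_log (hR n)).symm

end TailProduct

lemma one_add_div_div_eq_mul {x y z w : ℂ} (hx : x ≠ 0) (hy : y ≠ 0) (hyz : y + z ≠ 0) :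
    (1 + z / x) / (1 + z / w) = y * (x + z) / (x * (y + z)) * ((1 + z / y) / (1 + z / w)) := by
  rw [← mul_div_assoc, one_add_div hx, one_add_div hy]
  congr 1
  field_simp

lemma hasProd_tail_of_hasProd_ratioFactor {α β : ℝ} {ζ : ℕ → ℝ} {z P : ℂ} {N : ℕ}
    (hα : ∀ n : ℕ, (N : ℂ) + α + n ≠ 0) (hβ : ∀ n : ℕ, (N : ℂ) + β + n ≠ 0)
    (hαz : ∀ n : ℕ, (N : ℂ) + α + z + n ≠ 0) (hβz : ∀ n : ℕ, (N : ℂ) + β + z + n ≠ 0)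
    (hR : HasProd (fun n => ratioFactor β ζ z (N + n)) P) :
    HasProd (fun n : ℕ => (1 + z / (((N + n : ℕ) : ℂ) + α)) / (1 + z / ((ζ (N + n) : ℂ))))
      (Gamma ((N : ℂ) + α) * Gamma ((N : ℂ) + β + z)
        / (Gamma ((N : ℂ) + β) * Gamma ((N : ℂ) + α + z)) * P) := by
  refine ((hasProd_mul_div_mul_eq_Gamma (by ring) hβ hαz hα hβz).mul hR).congr_fun fun n => ?_
  have hcast : ((N + n : ℕ) : ℂ) = N + n := Nat.cast_add N n
  rw [ratioFactor, hcast, one_add_div_div_eq_mul (y := (N : ℂ) + n + β)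
    (fun h => hα n (by linear_combination h)) (fun h => hβ n (by linear_combination h))
    (fun h => hβz n (by linear_combination h))]
  congr 1
  ring

theorem stmt17_general (α β A₁ A₂ : ℝ) (ζ : ℕ → ℝ)
    (hζ : (fun n : ℕ => ζ n - ((n : ℝ) + β) - A₁ / ((n : ℝ) + β) - A₂ / ((n : ℝ) + β) ^ 2)
        =O[atTop] (fun n : ℕ => (n : ℝ) ^ (-3 : ℤ)))
    (z : ℂ) :
    ∃ E : ℕ → ℂ, E =O[atTop] (fun N : ℕ => ((N : ℝ) ^ (-3 : ℤ) : ℝ)) ∧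
      ∀ᶠ N : ℕ in atTop,
        (∏' n : ℕ, (1 + z / (((N + n : ℕ) : ℂ) + α)) / (1 + z / ((ζ (N + n) : ℂ))))
          = Complex.Gamma ((N : ℂ) + α) * Complex.Gamma ((N : ℂ) + β + z)
              / (Complex.Gamma ((N : ℂ) + β) * Complex.Gamma ((N : ℂ) + α + z))
            * Complex.exp
              ((A₁ : ℂ) * (f11 (β : ℂ) (β : ℂ) N - f11 (z + β) (β : ℂ) N)
                + (A₂ : ℂ) * (f12 (β : ℂ) (β : ℂ) N - f12 (z + β) (β : ℂ) N) + E N) := by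
  have hζ' : HasZetaExpansion β A₁ A₂ ζ := hζ
  refine ⟨fun N => ∑' n, (log (ratioFactor β ζ z (N + n)) - mainTerm β A₁ A₂ z (N + n)),
    (isBigO_tsum_nat_add (hζ'.isBigO_log_ratioFactor_sub_mainTerm z)).congr_right
      fun N => by simp [zpow_neg, inv_pow], ?_⟩
  have hR := eventually_forall_ge_atTop.2 <| eventually_one_add_div_div_ne_zero
    (isBigO_natCast_add_sub_natCast β)
    (isBigO_sub_natCast_of_isBigO_sub_natCast_add_const hζ'.isBigO_sub) z
  filter_upwards [hR, eventually_forall_add_natCast_ne_zero α,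
    eventually_forall_add_natCast_ne_zero β, eventually_forall_add_natCast_ne_zero (α + z),
    eventually_forall_add_natCast_ne_zero (β + z)] with N hR hα hβ hαz hβz
  simp only [← add_assoc] at hαz hβz
  exact (hasProd_tail_of_hasProd_ratioFactor hα hβ hαz hβz
    (hζ'.hasProd_ratioFactor z fun n => hR (N + n) (Nat.le_add_right N n))).tprod_eq

/-- Convergence acceleration: if `ζ_n = n + β + A₁/(n+β) + A₂/(n+β)² + O(n⁻³)`, then
as `N → ∞` the tail product `∏_{n≥N} (1+z/(n+α))/(1+z/ζ_n)` equals
`Γ(N+α)Γ(N+β+z)/(Γ(N+β)Γ(N+α+z))` times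
`exp[A₁(f₁₁(β,β;N) - f₁₁(z+β,β;N)) + A₂(f₁₂(β,β;N) - f₁₂(z+β,β;N)) + O(N⁻³)]`. -/
theorem stmt17 (α β A₁ A₂ : ℝ) (hα : 0 < α) (hβ : 0 < β) (ζ : ℕ → ℝ)
    (hζ : (fun n : ℕ => ζ n - ((n : ℝ) + β) - A₁ / ((n : ℝ) + β) - A₂ / ((n : ℝ) + β) ^ 2)
        =O[atTop] (fun n : ℕ => (n : ℝ) ^ (-3 : ℤ)))
    (z : ℂ)
    (hz1 : ∀ n : ℕ, (n : ℂ) + α + z ≠ 0)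
    (hz2 : ∀ n : ℕ, (ζ n : ℂ) + z ≠ 0)
    (hz3 : ∀ n : ℕ, (n : ℂ) + β + z ≠ 0)
    (hζ0 : ∀ n : ℕ, ζ n ≠ 0) :
    ∃ E : ℕ → ℂ, E =O[atTop] (fun N : ℕ => ((N : ℝ) ^ (-3 : ℤ) : ℝ)) ∧
      ∀ᶠ N : ℕ in atTop,
        (∏' n : ℕ, (1 + z / (((N + n : ℕ) : ℂ) + α)) / (1 + z / ((ζ (N + n) : ℂ))))
          = Complex.Gamma ((N : ℂ) + α) * Complex.Gamma ((N : ℂ) + β + z)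
              / (Complex.Gamma ((N : ℂ) + β) * Complex.Gamma ((N : ℂ) + α + z))
            * Complex.exp
              ((A₁ : ℂ) * (f11 (β : ℂ) (β : ℂ) N - f11 (z + β) (β : ℂ) N)
                + (A₂ : ℂ) * (f12 (β : ℂ) (β : ℂ) N - f12 (z + β) (β : ℂ) N) + E N) :=
  stmt17_general α β A₁ A₂ ζ hζ z
end
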